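/- arXiv:2007.01188 — 11 statements merged into one kernel-verified Lean document; each statement's English description precedes it below -/
import Mathlib

section
/- There exists a unique polynomial p_{uv} ∈ ℂ[λ] such that p_{uv}(λ) = m_A(λ)·(v^*(λI_n − A)^{-1}u) for every λ ∈ ℂ that is not an eigenvalue of A, and this polynomial satisfies deg p_{uv} ≤ l − 1, where l is the degree of the minimal polynomial m_A of A. -/
open Matrix Polynomial

/-- There exists a unique polynomial `p_uv` with
`p_uv(λ) = m_A(λ) · (v^*(λI - A)⁻¹ u)` for all `λ` outside the spectrum of `A`,
and this polynomial has degree at most `l - 1` where `l = deg m_A`. -/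
theorem stmt0 (n : ℕ) (hn : 1 ≤ n) (A : Matrix (Fin n) (Fin n) ℂ) (u v : Fin n → ℂ) :
    ∃ p : Polynomial ℂ,
      (∀ z : ℂ, z ∉ spectrum ℂ A →
        p.eval z = (minpoly ℂ A).eval z *
          (star v ⬝ᵥ ((z • (1 : Matrix (Fin n) (Fin n) ℂ) - A)⁻¹ *ᵥ u))) ∧
      p.degree ≤ ((minpoly ℂ A).natDegree - 1 : ℕ) ∧
      ∀ q : Polynomial ℂ,
        (∀ z : ℂ, z ∉ spectrum ℂ A →
          q.eval z = (minpoly ℂ A).eval z *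
            (star v ⬝ᵥ ((z • (1 : Matrix (Fin n) (Fin n) ℂ) - A)⁻¹ *ᵥ u))) → q = p := by
  haveI : Nonempty (Fin n) := ⟨⟨0, hn⟩⟩
  set m : Polynomial ℂ := minpoly ℂ A with hm
  have hint : IsIntegral ℂ A := Algebra.IsIntegral.isIntegral A
  have hmonic : m.Monic := minpoly.monic hint
  have hl : 0 < m.natDegree := minpoly.natDegree_pos hint
  set l : ℕ := m.natDegree with hldef
  -- The polynomial F(Y) = m(Y) - m(X) in (ℂ[X])[Y]
  set F : Polynomial (Polynomial ℂ) := m.map C - C m with hF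
  have hroot : F.IsRoot X := by
    simp [hF, IsRoot, eval_map, eval₂_C_X]
  set G : Polynomial (Polynomial ℂ) := F /ₘ (X - C X) with hG
  have hfact : (X - C (X : Polynomial ℂ)) * G = F :=
    mul_divByMonic_eq_iff_isRoot.2 hroot
  have hFdeg : F.natDegree = l := by
    rw [hF]
    rw [natDegree_sub_eq_left_of_natDegree_lt]
    · exact natDegree_map_eq_of_injective (C_injective) m
    · rw [natDegree_map_eq_of_injective (C_injective) m, natDegree_C]
      exact hl
  have hGdeg : G.natDegree < l := by
    rw [hG, natDegree_divByMonic F (monic_X_sub_C _), hFdeg, natDegree_X_sub_C]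
    omega
  -- the linear functional w
  set w : Polynomial ℂ →ₗ[ℂ] ℂ :=
    { toFun := fun q => star v ⬝ᵥ ((Polynomial.aeval A q) *ᵥ u)
      map_add' := by intro a b; simp [Matrix.add_mulVec, dotProduct_add]
      map_smul' := by intro c a; simp [Matrix.smul_mulVec, dotProduct_smul] } with hw
  -- the key identity
  have h2 : ∀ z : ℂ, F.eval (C z) = C (m.eval z) - m := by
    intro z
    rw [hF, eval_sub, eval_C, eval_map, eval₂_at_apply]
  have key : ∀ z : ℂ, (m.eval z) • (1 : Matrix (Fin n) (Fin n) ℂ)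
      = (z • (1 : Matrix (Fin n) (Fin n) ℂ) - A) * (Polynomial.aeval A (G.eval (C z))) := by
    intro z
    have e1 : (C z - X) * G.eval (C z) = F.eval (C z) := by
      rw [← hfact, eval_mul]; simp
    have step : (m.eval z) • (1 : Matrix (Fin n) (Fin n) ℂ)
        = (Polynomial.aeval A ((C z) - X)) * (Polynomial.aeval A (G.eval (C z))) := by
      rw [← _root_.map_mul, e1, h2, _root_.map_sub, minpoly.aeval, sub_zero, aeval_C,
        Algebra.algebraMap_eq_smul_one]
    rw [step, _root_.map_sub, aeval_C, aeval_X, Algebra.algebraMap_eq_smul_one]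
  -- define p
  set p : Polynomial ℂ := ∑ k ∈ Finset.range l, C (w (G.coeff k)) * X ^ k with hp
  have hpeval : ∀ z : ℂ, z ∉ spectrum ℂ A →
      p.eval z = m.eval z * (star v ⬝ᵥ ((z • (1 : Matrix (Fin n) (Fin n) ℂ) - A)⁻¹ *ᵥ u)) := by
    intro z hz
    have hunit : IsUnit (z • (1 : Matrix (Fin n) (Fin n) ℂ) - A) := by
      rw [spectrum.notMem_iff] at hz
      rwa [Algebra.algebraMap_eq_smul_one] at hz
    set M := z • (1 : Matrix (Fin n) (Fin n) ℂ) - A with hM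
    have hMinv : M⁻¹ * M = 1 := Matrix.nonsing_inv_mul M ((Matrix.isUnit_iff_isUnit_det M).mp hunit)
    have key2 : (m.eval z) • M⁻¹ = Polynomial.aeval A (G.eval (C z)) := by
      have := congrArg (fun B => M⁻¹ * B) (key z)
      simpa [← hM, ← mul_assoc, hMinv, Matrix.mul_smul, Matrix.smul_mul] using this
    have heval : G.eval (C z) = ∑ k ∈ Finset.range l, z ^ k • G.coeff k := by
      rw [eval_eq_sum_range' hGdeg]
      refine Finset.sum_congr rfl fun k _ => ?_
      rw [← C_pow, smul_eq_C_mul, mul_comm]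
    calc p.eval z
        = ∑ k ∈ Finset.range l, w (G.coeff k) * z ^ k := by
          simp [hp, eval_finset_sum]
      _ = w (G.eval (C z)) := by
          rw [heval, map_sum]
          refine Finset.sum_congr rfl fun k _ => ?_
          rw [LinearMap.map_smul, smul_eq_mul, mul_comm]
      _ = m.eval z * (star v ⬝ᵥ (M⁻¹ *ᵥ u)) := by
          show star v ⬝ᵥ ((Polynomial.aeval A (G.eval (C z))) *ᵥ u) = _
          rw [← key2]
          simp [Matrix.smul_mulVec, dotProduct_smul, smul_eq_mul]
  refine ⟨p, hpeval, ?_, ?_⟩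
  · refine (degree_sum_le _ _).trans ?_
    rw [Finset.sup_le_iff]
    intro k hk
    refine (degree_C_mul_X_pow_le k _).trans ?_
    exact_mod_cast Nat.le_sub_one_of_lt (Finset.mem_range.mp hk)
  · intro q hq
    apply eq_of_infinite_eval_eq
    apply Set.Infinite.mono ?_ ((Matrix.finite_spectrum A).infinite_compl)
    intro z hz
    simp only [Set.mem_setOf_eq]
    rw [hq z hz, hpeval z hz]
end

section
/- Let λ_0 ∈ ℂ ∖ σ(A), let τ_0 ∈ ℂ ∖ {0}, and let κ ≥ 1 be an integer. Then λ_0 is an eigenvalue of A + τ_0 uv^* of algebraic multiplicity exactly κ if and only if Q(λ_0) = 1/τ_0, Q^{(j)}(λ_0) = 0 for j = 1, …, κ − 1, and Q^{(κ)}(λ_0) ≠ 0, where Q^{(j)} denotes the j-th complex derivative of Q. -/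
open Matrix Polynomial

private lemma itd_cmul (τ : ℂ) (f : ℂ → ℂ) (x : ℂ) (n : ℕ) :
    iteratedDeriv n (fun z => τ * f z) x = τ * iteratedDeriv n f x := by
  induction n generalizing f with
  | zero => simp
  | succ m ih =>
    rw [iteratedDeriv_succ', iteratedDeriv_succ', deriv_const_mul_field' τ]
    exact ih (deriv f)

private lemma itd_shift (c τ : ℂ) (f : ℂ → ℂ) (x : ℂ) (n : ℕ) (hn : 1 ≤ n) :
    iteratedDeriv n (fun z => c + τ * f z) x = τ * iteratedDeriv n f x := by
  obtain ⟨m, rfl⟩ := Nat.exists_eq_add_of_le' hn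
  rw [iteratedDeriv_succ', deriv_const_add' c, deriv_const_mul_field' τ,
    itd_cmul τ (deriv f) x m, ← iteratedDeriv_succ']

private lemma analyticAt_deriv (f : ℂ → ℂ) {x : ℂ} (hf : AnalyticAt ℂ f x) :
    AnalyticAt ℂ (deriv f) x := by
  have h := ((ContinuousLinearMap.apply ℂ ℂ (1 : ℂ)).analyticAt (fderiv ℂ f x)).comp hf.fderiv
  have heq : (⇑((ContinuousLinearMap.apply ℂ ℂ) (1 : ℂ)) ∘ fderiv ℂ f) = deriv f := by
    funext y
    simp only [Function.comp_apply, ContinuousLinearMap.apply_apply]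
    rfl
  rwa [heq] at h

private lemma key_deriv : ∀ (m : ℕ) (f g : ℂ → ℂ) (z₀ : ℂ), AnalyticAt ℂ g z₀ →
    (∀ᶠ z in nhds z₀, f z = (z - z₀) ^ m * g z) →
    (∀ j < m, iteratedDeriv j f z₀ = 0) ∧
      iteratedDeriv m f z₀ = (m.factorial : ℂ) * g z₀ := by
  intro m
  induction m with
  | zero =>
    intro f g z₀ hg hfg
    refine ⟨fun j hj => absurd hj (Nat.not_lt_zero j), ?_⟩
    simpa using hfg.self_of_nhds
  | succ m ih =>
    intro f g z₀ hg hfg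
    set g₁ : ℂ → ℂ := fun z => (m + 1 : ℂ) * g z + (z - z₀) * deriv g z with hg₁
    have hg₁a : AnalyticAt ℂ g₁ z₀ :=
      (analyticAt_const.mul hg).add
        ((analyticAt_id.sub analyticAt_const).mul (analyticAt_deriv g hg))
    have hdf : ∀ᶠ z in nhds z₀, deriv f z = (z - z₀) ^ m * g₁ z := by
      have h1 : deriv f =ᶠ[nhds z₀] deriv (fun z => (z - z₀) ^ (m + 1) * g z) :=
        Filter.EventuallyEq.deriv hfg
      filter_upwards [h1, hg.eventually_analyticAt] with z h1z h2z
      have hd1 : HasDerivAt (fun z => (z - z₀) ^ (m + 1))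
          ((m + 1 : ℂ) * (z - z₀) ^ m) z := by
        simpa using ((hasDerivAt_id z).sub_const z₀).fun_pow (m + 1)
      have hd2 : HasDerivAt g (deriv g z) z := h2z.differentiableAt.hasDerivAt
      have := (hd1.fun_mul hd2).deriv
      rw [h1z, this, hg₁]
      ring
    have hIH := ih (deriv f) g₁ z₀ hg₁a hdf
    have hf0 : f z₀ = 0 := by simpa using hfg.self_of_nhds
    constructor
    · intro j hj
      cases j with
      | zero => simpa using hf0
      | succ i =>
        rw [iteratedDeriv_succ']
        exact hIH.1 i (by omega)
    · rw [iteratedDeriv_succ', hIH.2, hg₁]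
      push_cast [Nat.factorial_succ]
      ring
variable {n : ℕ}

private lemma charmatrix_map_eval (M : Matrix (Fin n) (Fin n) ℂ) (z : ℂ) :
    (charmatrix M).map (Polynomial.evalRingHom z) = z • (1 : Matrix (Fin n) (Fin n) ℂ) - M := by
  ext i j
  by_cases h : i = j <;>
    simp [h, charmatrix_apply, Matrix.one_apply, Matrix.diagonal_apply, Matrix.smul_apply]

private lemma eval_charpoly' (M : Matrix (Fin n) (Fin n) ℂ) (z : ℂ) :
    (M.charpoly).eval z = (z • (1 : Matrix (Fin n) (Fin n) ℂ) - M).det := by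
  have h := RingHom.map_det (Polynomial.evalRingHom z) (charmatrix M)
  rw [RingHom.mapMatrix_apply, charmatrix_map_eval] at h
  rw [Matrix.charpoly]
  exact h

private lemma adj_map_eval (M : Matrix (Fin n) (Fin n) ℂ) (z : ℂ) :
    ((charmatrix M).adjugate).map (Polynomial.evalRingHom z)
      = (z • (1 : Matrix (Fin n) (Fin n) ℂ) - M).adjugate := by
  have h := RingHom.map_adjugate (Polynomial.evalRingHom z) (charmatrix M)
  rw [RingHom.mapMatrix_apply, RingHom.mapMatrix_apply, charmatrix_map_eval] at h
  exact h

private lemma spectrum_iff (M : Matrix (Fin n) (Fin n) ℂ) (z : ℂ) :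
    z ∉ spectrum ℂ M ↔ (M.charpoly).eval z ≠ 0 := by
  rw [spectrum.mem_iff, not_not, Algebra.algebraMap_eq_smul_one,
    Matrix.isUnit_iff_isUnit_det, isUnit_iff_ne_zero, eval_charpoly']

private noncomputable def rp (A : Matrix (Fin n) (Fin n) ℂ) (u v : Fin n → ℂ) : Polynomial ℂ :=
  (fun i => C (star v i)) ⬝ᵥ ((charmatrix A).adjugate *ᵥ fun j => C (u j))

private lemma eval_rp (A : Matrix (Fin n) (Fin n) ℂ) (u v : Fin n → ℂ) (z : ℂ) :
    (rp A u v).eval z = star v ⬝ᵥ ((z • (1 : Matrix (Fin n) (Fin n) ℂ) - A).adjugate *ᵥ u) := by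
  have hadj : ∀ i j, ((charmatrix A).adjugate i j).eval z
      = (z • (1 : Matrix (Fin n) (Fin n) ℂ) - A).adjugate i j := by
    intro i j
    rw [← adj_map_eval]
    simp [Matrix.map_apply]
  simp [rp, dotProduct, mulVec, eval_finset_sum, hadj]

private lemma Q_rep (A : Matrix (Fin n) (Fin n) ℂ) (u v : Fin n → ℂ) (z : ℂ)
    (hz : (A.charpoly).eval z ≠ 0) :
    star v ⬝ᵥ ((z • (1 : Matrix (Fin n) (Fin n) ℂ) - A)⁻¹ *ᵥ u)
      = (rp A u v).eval z / (A.charpoly).eval z := by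
  rw [Matrix.inv_def, Ring.inverse_eq_inv', smul_mulVec, dotProduct_smul, eval_rp,
    ← eval_charpoly']
  rw [smul_eq_mul, div_eq_mul_inv, mul_comm]

private lemma smul_vecMulVec (c : ℂ) (u w : Fin n → ℂ) :
    c • vecMulVec u w = vecMulVec (c • u) w := by
  ext i j; simp [vecMulVec_apply]; ring

private lemma det_pert (A : Matrix (Fin n) (Fin n) ℂ) (u v : Fin n → ℂ) (τ0 : ℂ) (z : ℂ)
    (hz : (A.charpoly).eval z ≠ 0) :
    ((A + τ0 • vecMulVec u (star v)).charpoly).eval z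
      = (A.charpoly).eval z - τ0 * (rp A u v).eval z := by
  have hM : IsUnit (z • (1 : Matrix (Fin n) (Fin n) ℂ) - A).det := by
    rw [← eval_charpoly']; exact isUnit_iff_ne_zero.mpr hz
  have hsplit : z • (1 : Matrix (Fin n) (Fin n) ℂ) - (A + τ0 • vecMulVec u (star v))
      = (z • (1 : Matrix (Fin n) (Fin n) ℂ) - A)
        + replicateCol Unit ((-τ0) • u) * replicateRow Unit (star v) := by
    rw [← vecMulVec_eq Unit, ← smul_vecMulVec, neg_smul]
    abel
  rw [eval_charpoly', hsplit, det_add_replicateCol_mul_replicateRow hM]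
  have hentry : ((1 : Matrix Unit Unit ℂ)
        + replicateRow Unit (star v) * (z • (1 : Matrix (Fin n) (Fin n) ℂ) - A)⁻¹ * replicateCol Unit ((-τ0) • u)).det
      = 1 - τ0 * (star v ⬝ᵥ ((z • (1 : Matrix (Fin n) (Fin n) ℂ) - A)⁻¹ *ᵥ u)) := by
    rw [Matrix.det_unique]
    simp [Matrix.add_apply, Matrix.one_apply, Matrix.mul_apply, Matrix.replicateRow_apply,
      Matrix.replicateCol_apply, dotProduct, mulVec, Finset.mul_sum, Finset.sum_mul]
    rw [← sub_eq_add_neg]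
    congr 1
    rw [Finset.sum_comm]
    exact Finset.sum_congr rfl fun i _ => Finset.sum_congr rfl fun j _ => by ring
  rw [hentry, Q_rep A u v z hz, ← eval_charpoly', mul_sub, mul_one, mul_left_comm,
    mul_comm ((A.charpoly).eval z), div_mul_cancel₀ _ hz]
private lemma order_iff (s p : Polynomial ℂ) (hs : s ≠ 0) (z₀ : ℂ) (hp : p.eval z₀ ≠ 0)
    (h : ℂ → ℂ) (hh : ∀ᶠ z in nhds z₀, h z = s.eval z / p.eval z) (κ : ℕ) :
    s.rootMultiplicity z₀ = κ ↔
      (∀ j < κ, iteratedDeriv j h z₀ = 0) ∧ iteratedDeriv κ h z₀ ≠ 0 := by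
  set m := s.rootMultiplicity z₀ with hm
  set t := s /ₘ (X - C z₀) ^ m with ht
  have hfact : (X - C z₀) ^ m * t = s := s.pow_mul_divByMonic_rootMultiplicity_eq z₀
  have ht0 : t.eval z₀ ≠ 0 := eval_divByMonic_pow_rootMultiplicity_ne_zero z₀ hs
  set g : ℂ → ℂ := fun z => t.eval z / p.eval z with hg
  have hga : AnalyticAt ℂ g z₀ :=
    ((Polynomial.differentiable t).analyticAt z₀).div
      ((Polynomial.differentiable p).analyticAt z₀) hp
  have hg0 : g z₀ ≠ 0 := div_ne_zero ht0 hp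
  have hp' : p ≠ 0 := fun h0 => hp (by simp [h0])
  have hU : ∀ᶠ z in nhds z₀, p.eval z ≠ 0 := by
    have hfin : {x : ℂ | p.IsRoot x}.Finite := Polynomial.finite_setOf_isRoot hp'
    have : IsOpen {x : ℂ | p.eval x ≠ 0} := by
      have := hfin.isClosed
      simpa [Set.compl_setOf, Polynomial.IsRoot] using this.isOpen_compl
    exact this.mem_nhds hp
  have hh2 : ∀ᶠ z in nhds z₀, h z = (z - z₀) ^ m * g z := by
    filter_upwards [hh, hU] with z h1 h2
    rw [h1, ← hfact, hg]
    simp only [eval_mul, eval_pow, eval_sub, eval_X, eval_C]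
    field_simp
  have hkey := key_deriv m h g z₀ hga hh2
  have hne : iteratedDeriv m h z₀ ≠ 0 := by
    rw [hkey.2]
    exact mul_ne_zero (Nat.cast_ne_zero.mpr m.factorial_ne_zero) hg0
  constructor
  · rintro rfl
    exact ⟨hkey.1, hne⟩
  · rintro ⟨h1, h2⟩
    by_contra hne'
    rcases Nat.lt_or_ge m κ with hlt | hge
    · exact hne (h1 m hlt)
    · exact h2 (hkey.1 κ (by omega))

private lemma pert_poly {n : ℕ} (A : Matrix (Fin n) (Fin n) ℂ) (u v : Fin n → ℂ) (τ0 : ℂ) :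
    (A + τ0 • vecMulVec u (star v)).charpoly = A.charpoly - C τ0 * rp A u v := by
  apply Polynomial.eq_of_infinite_eval_eq
  have hp' : A.charpoly ≠ 0 := (Matrix.charpoly_monic A).ne_zero
  have hfin : {x : ℂ | A.charpoly.IsRoot x}.Finite := Polynomial.finite_setOf_isRoot hp'
  apply Set.Infinite.mono (s := {z : ℂ | A.charpoly.eval z ≠ 0})
  · intro z hz
    have := det_pert A u v τ0 z hz
    simp only [Set.mem_setOf_eq, eval_sub, eval_mul, eval_C]
    exact this
  · have : {z : ℂ | A.charpoly.eval z ≠ 0} = {x : ℂ | A.charpoly.IsRoot x}ᶜ := by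
      ext z; simp [Polynomial.IsRoot]
    rw [this]
    exact hfin.infinite_compl

/-- For `λ₀ ∉ σ(A)`, `τ₀ ≠ 0` and `κ ≥ 1`: `λ₀` is an eigenvalue of
`A + τ₀uv^*` of algebraic multiplicity exactly `κ` iff `Q(λ₀) = 1/τ₀`,
`Q⁽ʲ⁾(λ₀) = 0` for `j = 1, …, κ−1`, and `Q⁽ᵏ⁾(λ₀) ≠ 0`. -/
theorem stmt2 (n : ℕ) (hn : 1 ≤ n) (A : Matrix (Fin n) (Fin n) ℂ) (u v : Fin n → ℂ)
    (Q : ℂ → ℂ)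
    (hQ : Q = fun z => star v ⬝ᵥ ((z • (1 : Matrix (Fin n) (Fin n) ℂ) - A)⁻¹ *ᵥ u))
    (lam0 : ℂ) (hlam0 : lam0 ∉ spectrum ℂ A) (τ0 : ℂ) (hτ0 : τ0 ≠ 0)
    (κ : ℕ) (hκ : 1 ≤ κ) :
    (Matrix.charpoly (A + τ0 • vecMulVec u (star v))).rootMultiplicity lam0 = κ ↔
      (Q lam0 = 1 / τ0 ∧
        (∀ j : ℕ, 1 ≤ j → j ≤ κ - 1 → iteratedDeriv j Q lam0 = 0) ∧
        iteratedDeriv κ Q lam0 ≠ 0) := by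
  have hp0 : (A.charpoly).eval lam0 ≠ 0 := (spectrum_iff A lam0).mp hlam0
  set s : Polynomial ℂ := (A + τ0 • vecMulVec u (star v)).charpoly with hsdef
  have hs0 : s ≠ 0 := (Matrix.charpoly_monic _).ne_zero
  set H : ℂ → ℂ := fun z => 1 + (-τ0) * Q z with hH
  have hp' : A.charpoly ≠ 0 := (Matrix.charpoly_monic A).ne_zero
  have hU : ∀ᶠ z in nhds lam0, (A.charpoly).eval z ≠ 0 := by
    have hfin : {x : ℂ | A.charpoly.IsRoot x}.Finite := Polynomial.finite_setOf_isRoot hp'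
    have hop : IsOpen {x : ℂ | A.charpoly.eval x ≠ 0} := by
      have := hfin.isClosed
      simpa [Set.compl_setOf, Polynomial.IsRoot] using this.isOpen_compl
    exact hop.mem_nhds hp0
  have hHrep : ∀ᶠ z in nhds lam0, H z = s.eval z / (A.charpoly).eval z := by
    filter_upwards [hU] with z hz
    have hQz : Q z = (rp A u v).eval z / (A.charpoly).eval z := by
      rw [hQ]; exact Q_rep A u v z hz
    rw [hH]
    simp only
    rw [hQz, hsdef, pert_poly A u v τ0]
    simp only [eval_sub, eval_mul, eval_C]
    field_simp
    ring
  have hmain := order_iff s A.charpoly hs0 lam0 hp0 H hHrep κ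
  rw [hmain]
  have hshift : ∀ j : ℕ, 1 ≤ j → iteratedDeriv j H lam0 = (-τ0) * iteratedDeriv j Q lam0 :=
    fun j hj => itd_shift 1 (-τ0) Q lam0 j hj
  have hH0 : iteratedDeriv 0 H lam0 = 1 - τ0 * Q lam0 := by
    rw [iteratedDeriv_zero, hH]; ring
  constructor
  · rintro ⟨h1, h2⟩
    refine ⟨?_, ?_, ?_⟩
    · have := h1 0 (by omega)
      rw [hH0] at this
      field_simp at this ⊢
      linear_combination -this
    · intro j hj1 hj2
      have := h1 j (by omega)
      rw [hshift j hj1] at this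
      exact (mul_eq_zero.mp this).resolve_left (by simpa using hτ0)
    · intro hc
      exact h2 (by rw [hshift κ hκ, hc, mul_zero])
  · rintro ⟨h1, h2, h3⟩
    refine ⟨?_, ?_⟩
    · intro j hj
      cases j with
      | zero =>
        rw [hH0, h1]
        field_simp
        simp
      | succ i =>
        rw [hshift (i + 1) (by omega), h2 (i + 1) (by omega) (by omega), mul_zero]
    · rw [hshift κ hκ]
      exact mul_ne_zero (by simpa using hτ0) h3
end

section
/- If λ_0 ∈ ℂ ∖ σ(A) is an eigenvalue of A + τ_0 uv^* for some τ_0 ∈ ℂ, then its geometric multiplicity is one, i.e., the kernel of A + τ_0 uv^* − λ_0 I_n has complex dimension exactly 1. -/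
open Matrix

lemma vecMulVec_mulVec' {n : ℕ} (u w x : Fin n → ℂ) :
    (vecMulVec u w).mulVec x = (w ⬝ᵥ x) • u := by
  funext i
  simp [Matrix.mulVec, Matrix.vecMulVec_apply, dotProduct, Finset.sum_mul]
  exact Finset.sum_congr rfl fun j _ => by ring

/-- If `λ₀ ∉ σ(A)` is an eigenvalue of `A + τ₀uv^*`, then its geometric
multiplicity is one: the kernel of `A + τ₀uv^* − λ₀I` has complex dimension exactly 1. -/
theorem stmt3 (n : ℕ) (hn : 1 ≤ n) (A : Matrix (Fin n) (Fin n) ℂ) (u v : Fin n → ℂ)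
    (lam0 : ℂ) (hlam0 : lam0 ∉ spectrum ℂ A) (τ0 : ℂ)
    (h : lam0 ∈ spectrum ℂ (A + τ0 • vecMulVec u (star v))) :
    Module.finrank ℂ
      (LinearMap.ker (Matrix.mulVecLin
        (A + τ0 • vecMulVec u (star v) - lam0 • (1 : Matrix (Fin n) (Fin n) ℂ)))) = 1 := by
  set M : Matrix (Fin n) (Fin n) ℂ := A + τ0 • vecMulVec u (star v) with hM
  set E : Matrix (Fin n) (Fin n) ℂ := A - lam0 • 1 with hE
  -- E is invertible
  have hunitE : IsUnit E := by
    rw [spectrum.mem_iff, not_not] at hlam0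
    have : E = -(algebraMap ℂ (Matrix (Fin n) (Fin n) ℂ) lam0 - A) := by
      simp [hE, Algebra.algebraMap_eq_smul_one]
    rw [this]
    exact hlam0.neg
  have hdetE : E.det ≠ 0 := by
    have := (Matrix.isUnit_iff_isUnit_det E).mp hunitE
    simpa [isUnit_iff_ne_zero] using this
  -- M - lam0 • 1 is singular
  have hsing : ¬ IsUnit (M - lam0 • (1 : Matrix (Fin n) (Fin n) ℂ)) := by
    rw [spectrum.mem_iff] at h
    intro hu
    apply h
    have : algebraMap ℂ (Matrix (Fin n) (Fin n) ℂ) lam0 - M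
        = -(M - lam0 • 1) := by
      simp [Algebra.algebraMap_eq_smul_one]
    rw [this]
    exact hu.neg
  have hdet0 : (M - lam0 • (1 : Matrix (Fin n) (Fin n) ℂ)).det = 0 := by
    by_contra hd
    exact hsing ((Matrix.isUnit_iff_isUnit_det _).mpr (isUnit_iff_ne_zero.mpr hd))
  obtain ⟨x0, hx0ne, hx0⟩ := (Matrix.exists_mulVec_eq_zero_iff).mpr hdet0
  -- the kernel computation: for x in kernel, E.mulVec x = -(τ0 * (star v ⬝ᵥ x)) • u
  have key : ∀ x : Fin n → ℂ, (M - lam0 • (1 : Matrix (Fin n) (Fin n) ℂ)).mulVec x = 0 →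
      x = (-(τ0 * (star v ⬝ᵥ x))) • (E⁻¹.mulVec u) := by
    intro x hx
    have h1 : E.mulVec x = (-(τ0 * (star v ⬝ᵥ x))) • u := by
      have hsplit : M - lam0 • (1 : Matrix (Fin n) (Fin n) ℂ)
          = E + τ0 • vecMulVec u (star v) := by
        rw [hM, hE]; abel
      have : (M - lam0 • (1 : Matrix (Fin n) (Fin n) ℂ)).mulVec x
          = E.mulVec x + (τ0 * (star v ⬝ᵥ x)) • u := by
        rw [hsplit, Matrix.add_mulVec, Matrix.smul_mulVec, vecMulVec_mulVec',
          smul_smul]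
      rw [this] at hx
      have := eq_neg_of_add_eq_zero_left hx
      rw [this]; simp
    calc x = E⁻¹.mulVec (E.mulVec x) := by
            rw [Matrix.mulVec_mulVec, Matrix.nonsing_inv_mul E hdetE.isUnit, Matrix.one_mulVec]
      _ = (-(τ0 * (star v ⬝ᵥ x))) • (E⁻¹.mulVec u) := by
            rw [h1, Matrix.mulVec_smul]
  set w : Fin n → ℂ := E⁻¹.mulVec u with hw
  set K := LinearMap.ker (Matrix.mulVecLin (M - lam0 • (1 : Matrix (Fin n) (Fin n) ℂ))) with hK
  have hKle : K ≤ Submodule.span ℂ {w} := by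
    intro x hx
    rw [LinearMap.mem_ker, Matrix.mulVecLin_apply] at hx
    rw [key x hx]
    exact Submodule.smul_mem _ _ (Submodule.mem_span_singleton_self w)
  have hx0K : x0 ∈ K := by
    rw [LinearMap.mem_ker, Matrix.mulVecLin_apply]; exact hx0
  have hwne : w ≠ 0 := by
    intro hw0
    apply hx0ne
    have := key x0 hx0
    rw [hw0] at this
    simpa using this
  apply le_antisymm
  · calc Module.finrank ℂ K ≤ Module.finrank ℂ (Submodule.span ℂ {w}) :=
          Submodule.finrank_mono hKle
      _ = 1 := finrank_span_singleton hwne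
  · rw [Nat.one_le_iff_ne_zero]
    intro hzero
    have : K = ⊥ := Submodule.finrank_eq_zero.mp hzero
    rw [this] at hx0K
    exact hx0ne (Submodule.mem_bot ℂ |>.mp hx0K)
end

section
/- If λ_0 ∈ ℂ ∖ σ(A) is an eigenvalue of A + τ_0 uv^* for some τ_0 ∈ ℂ, then for every τ_1 ∈ ℂ with τ_1 ≠ τ_0, λ_0 is not an eigenvalue of A + τ_1 uv^*; in particular, a point outside σ(A) is an eigenvalue of A + τ uv^* for at most one value of τ ∈ ℂ. -/
open Matrix

/-- If `λ₀ ∉ σ(A)` is an eigenvalue of `A + τ₀uv^*`, then for every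
`τ₁ ≠ τ₀`, `λ₀` is not an eigenvalue of `A + τ₁uv^*`: a point outside `σ(A)` is an
eigenvalue of `A + τuv^*` for at most one `τ ∈ ℂ`. -/
theorem stmt4 (n : ℕ) (hn : 1 ≤ n) (A : Matrix (Fin n) (Fin n) ℂ) (u v : Fin n → ℂ)
    (lam0 : ℂ) (hlam0 : lam0 ∉ spectrum ℂ A) (τ0 : ℂ)
    (h : lam0 ∈ spectrum ℂ (A + τ0 • vecMulVec u (star v))) :
    ∀ τ1 : ℂ, τ1 ≠ τ0 → lam0 ∉ spectrum ℂ (A + τ1 • vecMulVec u (star v)) := by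
  rw [spectrum.mem_iff, not_not] at hlam0
  set M := algebraMap ℂ (Matrix (Fin n) (Fin n) ℂ) lam0 - A with hMdef
  have hM : IsUnit M.det := (Matrix.isUnit_iff_isUnit_det M).mp hlam0
  set c : ℂ := star v ⬝ᵥ (M⁻¹ *ᵥ u) with hc
  have key : ∀ τ : ℂ, lam0 ∈ spectrum ℂ (A + τ • vecMulVec u (star v)) ↔ 1 - τ * c = 0 := by
    intro τ
    have key1 : algebraMap ℂ (Matrix (Fin n) (Fin n) ℂ) lam0 - (A + τ • vecMulVec u (star v))
        = M + replicateCol Unit (-(τ • u)) * replicateRow Unit (star v) := by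
      rw [vecMulVec_eq Unit]
      have hcol : replicateCol Unit (-(τ • u)) = -(τ • replicateCol Unit u) := by
        ext i j; simp [replicateCol]
      rw [hcol, hMdef]
      ext i j
      simp [Matrix.sub_apply, Matrix.add_apply, Matrix.smul_apply, Matrix.neg_apply,
        Matrix.mul_apply]
      ring
    have hd : (M + replicateCol Unit (-(τ • u)) * replicateRow Unit (star v)).det
        = M.det * (1 - τ * c) := by
      rw [det_add_replicateCol_mul_replicateRow (ι := Unit) hM]
      congr 1
      rw [det_unique]
      simp [hc, Matrix.mul_apply, dotProduct, mulVec, Finset.mul_sum, Finset.sum_mul,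
        sub_eq_add_neg]
      rw [Finset.sum_comm]
      refine Finset.sum_congr rfl fun x _ => Finset.sum_congr rfl fun i _ => by ring
    rw [spectrum.mem_iff, key1, Matrix.isUnit_iff_isUnit_det, hd, isUnit_iff_ne_zero,
      not_ne_iff, mul_eq_zero]
    simp [hM.ne_zero]
  intro τ1 hτ1 hmem
  have h0 : 1 - τ0 * c = 0 := (key τ0).mp h
  have h1 : 1 - τ1 * c = 0 := (key τ1).mp hmem
  have hcne : c ≠ 0 := by
    intro hc0
    rw [hc0, mul_zero, sub_zero] at h0
    exact one_ne_zero h0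
  apply hτ1
  have : τ1 * c = τ0 * c := by linear_combination h0 - h1
  exact mul_right_cancel₀ hcne this
end

section
/- For every t > 0 and every z ∈ ℂ ∖ σ(A): z ∈ σ(A,u,v;t) if and only if t·|v^*(zI_n − A)^{-1}u| = 1; that is, outside the spectrum of A, the set σ(A,u,v;t) is exactly the level set {z ∈ ℂ ∖ σ(A) : 1/|Q(z)| = t} of the modulus of 1/Q. -/
open Matrix

/-- For `t > 0` and `z ∉ σ(A)`: `z ∈ σ(A,u,v;t)` iff
`t·|v^*(zI − A)⁻¹u| = 1`, i.e. outside `σ(A)` the set `σ(A,u,v;t)` is the level set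
`{z : 1/|Q(z)| = t}`. -/
theorem stmt5 (n : ℕ) (hn : 1 ≤ n) (A : Matrix (Fin n) (Fin n) ℂ) (u v : Fin n → ℂ)
    (t : ℝ) (ht : 0 < t) (z : ℂ) (hz : z ∉ spectrum ℂ A) :
    (∃ θ ∈ Set.Ico (0 : ℝ) (2 * Real.pi),
        z ∈ spectrum ℂ
          (A + ((t : ℂ) * Complex.exp (θ * Complex.I)) • vecMulVec u (star v))) ↔
      t * ‖star v ⬝ᵥ ((z • (1 : Matrix (Fin n) (Fin n) ℂ) - A)⁻¹ *ᵥ u)‖ = 1 := by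
  set B : Matrix (Fin n) (Fin n) ℂ := z • (1 : Matrix (Fin n) (Fin n) ℂ) - A with hBdef
  have hB : IsUnit B := by
    rw [spectrum.notMem_iff] at hz
    rwa [Algebra.algebraMap_eq_smul_one] at hz
  have hBd : IsUnit B.det := (Matrix.isUnit_iff_isUnit_det B).mp hB
  set Q : ℂ := star v ⬝ᵥ (B⁻¹ *ᵥ u) with hQdef
  have key : ∀ c : ℂ, z ∈ spectrum ℂ (A + c • vecMulVec u (star v)) ↔ c * Q = 1 := by
    intro c
    rw [spectrum.mem_iff, Algebra.algebraMap_eq_smul_one,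
      Matrix.isUnit_iff_isUnit_det, isUnit_iff_ne_zero, not_not]
    have hM : z • (1 : Matrix (Fin n) (Fin n) ℂ) - (A + c • vecMulVec u (star v))
        = B + replicateCol (Fin 1) (-(c • u)) * replicateRow (Fin 1) (star v) := by
      erw [← vecMulVec_eq (ι := Fin 1)]
      ext i j
      simp [hBdef, Matrix.sub_apply, Matrix.add_apply, Matrix.smul_apply,
        vecMulVec_apply, Pi.neg_apply, Pi.smul_apply, smul_eq_mul]
      ring
    erw [hM, det_add_replicateCol_mul_replicateRow (ι := Fin 1) hBd, Matrix.mul_assoc, ← replicateCol_mulVec, mulVec_neg,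
      mulVec_smul]
    simp only [det_unique, Matrix.add_apply, Matrix.one_apply_eq,
      Matrix.replicateRow_mul_replicateCol_apply, dotProduct_neg, dotProduct_smul, smul_eq_mul]
    rw [mul_eq_zero]
    constructor
    · rintro (h | h)
      · exact absurd h hBd.ne_zero
      · linear_combination -h
    · intro h
      right
      rw [h]
      ring
  constructor
  · rintro ⟨θ, _, hθ⟩
    have := (key _).mp hθ
    have h2 := congrArg (‖·‖) this
    rw [norm_mul, norm_mul, Complex.norm_exp_ofReal_mul_I, Complex.norm_real, Real.norm_eq_abs,
      abs_of_pos ht, mul_one, norm_one] at h2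
    exact h2
  · intro h
    have hQ0 : (t : ℂ) * Q ≠ 0 := by
      intro h0
      apply_fun (‖·‖) at h0
      rw [norm_zero, norm_mul, Complex.norm_real, Real.norm_eq_abs, abs_of_pos ht] at h0
      linarith
    set w : ℂ := ((t : ℂ) * Q)⁻¹ with hw
    have hwabs : ‖w‖ = 1 := by
      rw [hw, norm_inv, norm_mul, Complex.norm_real, Real.norm_eq_abs, abs_of_pos ht, h, inv_one]
    have hexp : Complex.exp (Complex.arg w * Complex.I) = w := by
      have := Complex.norm_mul_exp_arg_mul_I w
      rwa [hwabs, Complex.ofReal_one, one_mul] at this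
    have hπ : 0 < Real.pi := Real.pi_pos
    rcases le_or_gt 0 (Complex.arg w) with hθ | hθ
    · refine ⟨Complex.arg w, ⟨hθ, ?_⟩, ?_⟩
      · have := Complex.arg_le_pi w
        linarith
      · rw [key]
        rw [hexp, hw]
        field_simp
        exact div_self hQ0
    · refine ⟨Complex.arg w + 2 * Real.pi,
        ⟨by linarith [Complex.neg_pi_lt_arg w], by linarith⟩, ?_⟩
      rw [key]
      have : Complex.exp (((Complex.arg w + 2 * Real.pi : ℝ) : ℂ) * Complex.I) = w := by
        push_cast
        rw [add_mul, Complex.exp_add, Complex.exp_two_pi_mul_I, mul_one, hexp]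
      rw [this, hw]
      field_simp
      exact div_self hQ0
end

section
/- Let A ∈ ℝ^{n×n} and u, v ∈ ℝ^n, and suppose there exist x ∈ ℝ with x ∉ σ(A) and τ_0 > 0 such that Q(x) = 1/τ_0, Q'(x) = 0 and Q''(x) ≠ 0. Then for every δ > 0 there exists ε > 0 such that: for all Ã ∈ ℝ^{n×n} and ũ, ṽ ∈ ℝ^n with ‖Ã − A‖ < ε, ‖ũ − u‖ < ε and ‖ṽ − v‖ < ε, there exist x̃ ∈ ℝ with x̃ ∉ σ(Ã) and |x̃ − x| < δ, and τ̃_0 > 0, such that Q̃(x̃) = 1/τ̃_0, Q̃'(x̃) = 0 and Q̃''(x̃) ≠ 0, where Q̃(λ) = ṽ^⊤(λI_n − Ã)^{-1}ũ. -/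
open Matrix Filter Topology Set

set_option maxHeartbeats 1000000

attribute [local instance] Matrix.normedAddCommGroup

namespace Stmt10Aux

variable {n : ℕ}

abbrev Par (n : ℕ) := Matrix (Fin n) (Fin n) ℝ × (Fin n → ℝ) × (Fin n → ℝ)

noncomputable def Rm (q : ℝ × Par n) : Matrix (Fin n) (Fin n) ℝ :=
  (q.1 • (1 : Matrix (Fin n) (Fin n) ℝ) - q.2.1)⁻¹

def Good (q : ℝ × Par n) : Prop :=
  IsUnit (q.1 • (1 : Matrix (Fin n) (Fin n) ℝ) - q.2.1).det

noncomputable def Φ0 (q : ℝ × Par n) : ℝ := q.2.2.2 ⬝ᵥ (Rm q *ᵥ q.2.2.1)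
noncomputable def Φ1 (q : ℝ × Par n) : ℝ := -(q.2.2.2 ⬝ᵥ ((Rm q * Rm q) *ᵥ q.2.2.1))
noncomputable def Φ2 (q : ℝ × Par n) : ℝ :=
  2 * (q.2.2.2 ⬝ᵥ ((Rm q * (Rm q * Rm q)) *ᵥ q.2.2.1))

lemma continuous_M :
    Continuous (fun q : ℝ × Par n => q.1 • (1 : Matrix (Fin n) (Fin n) ℝ) - q.2.1) :=
  (continuous_fst.smul continuous_const).sub (continuous_fst.comp continuous_snd)

lemma isOpen_good : IsOpen {q : ℝ × Par n | Good q} := by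
  have h : {q : ℝ × Par n | Good q}
      = (fun q : ℝ × Par n => (q.1 • (1 : Matrix (Fin n) (Fin n) ℝ) - q.2.1).det) ⁻¹'
        {t : ℝ | t ≠ 0} := by
    ext q; simp [Good, isUnit_iff_ne_zero]
  rw [h]
  exact (continuous_M.matrix_det).isOpen_preimage _ isOpen_ne

lemma continuousAt_Rm {q : ℝ × Par n} (hq : Good q) : ContinuousAt Rm q := by
  have h1 : ContinuousAt Inv.inv (q.1 • (1 : Matrix (Fin n) (Fin n) ℝ) - q.2.1) := by
    apply continuousAt_matrix_inv
    rw [Ring.inverse_eq_inv']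
    exact continuousAt_inv₀ (isUnit_iff_ne_zero.mp hq)
  have h2 : ContinuousAt (Inv.inv ∘ (fun q : ℝ × Par n =>
      q.1 • (1 : Matrix (Fin n) (Fin n) ℝ) - q.2.1)) q :=
    ContinuousAt.comp (x := q)
      (f := fun q : ℝ × Par n => q.1 • (1 : Matrix (Fin n) (Fin n) ℝ) - q.2.1)
      h1 continuous_M.continuousAt
  exact h2

lemma continuousAt_dotmv {F : ℝ × Par n → Matrix (Fin n) (Fin n) ℝ} {q : ℝ × Par n}
    (hF : ContinuousAt F q) :
    ContinuousAt (fun q : ℝ × Par n => q.2.2.2 ⬝ᵥ (F q *ᵥ q.2.2.1)) q := by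
  have hglob : Continuous (fun s : (Fin n → ℝ) × Matrix (Fin n) (Fin n) ℝ × (Fin n → ℝ) =>
      s.1 ⬝ᵥ (s.2.1 *ᵥ s.2.2)) :=
    continuous_fst.dotProduct
      ((continuous_fst.comp continuous_snd).matrix_mulVec (continuous_snd.comp continuous_snd))
  have hin : ContinuousAt (fun q : ℝ × Par n => (q.2.2.2, F q, q.2.2.1)) q := by
    refine ContinuousAt.prodMk (by fun_prop) (ContinuousAt.prodMk hF (by fun_prop))
  exact hglob.continuousAt.comp hin

lemma continuousAt_Φ0 {q : ℝ × Par n} (hq : Good q) : ContinuousAt Φ0 q :=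
  continuousAt_dotmv (continuousAt_Rm hq)

lemma continuousAt_mulRm {q : ℝ × Par n} (hq : Good q) :
    ContinuousAt (fun q : ℝ × Par n => Rm q * Rm q) q := by
  have hmul : Continuous (fun s : Matrix (Fin n) (Fin n) ℝ × Matrix (Fin n) (Fin n) ℝ =>
      s.1 * s.2) := continuous_fst.matrix_mul continuous_snd
  exact hmul.continuousAt.comp ((continuousAt_Rm hq).prodMk (continuousAt_Rm hq))

lemma continuousAt_Φ1 {q : ℝ × Par n} (hq : Good q) : ContinuousAt Φ1 q :=
  (continuousAt_dotmv (continuousAt_mulRm hq)).neg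

lemma continuousAt_Φ2 {q : ℝ × Par n} (hq : Good q) : ContinuousAt Φ2 q := by
  have hmul : Continuous (fun s : Matrix (Fin n) (Fin n) ℝ × Matrix (Fin n) (Fin n) ℝ =>
      s.1 * s.2) := continuous_fst.matrix_mul continuous_snd
  have h3 : ContinuousAt (fun q : ℝ × Par n => Rm q * (Rm q * Rm q)) q :=
    hmul.continuousAt.comp ((continuousAt_Rm hq).prodMk (continuousAt_mulRm hq))
  exact continuousAt_const.mul (continuousAt_dotmv h3)

lemma resolvent_id (p : Par n) {y z : ℝ} (hy : Good (y, p)) (hz : Good (z, p)) :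
    Rm (z, p) - Rm (y, p) = (y - z) • (Rm (z, p) * Rm (y, p)) := by
  have h1 : (y • (1 : Matrix (Fin n) (Fin n) ℝ) - p.1) * Rm (y, p) = 1 :=
    Matrix.mul_nonsing_inv _ hy
  have h2 : Rm (z, p) * (z • (1 : Matrix (Fin n) (Fin n) ℝ) - p.1) = 1 :=
    Matrix.nonsing_inv_mul _ hz
  have hd : (y • (1 : Matrix (Fin n) (Fin n) ℝ) - p.1) - (z • (1 : Matrix (Fin n) (Fin n) ℝ) - p.1)
      = (y - z) • (1 : Matrix (Fin n) (Fin n) ℝ) := by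
    rw [sub_sub_sub_cancel_right, ← sub_smul]
  calc Rm (z, p) - Rm (y, p)
      = Rm (z, p) * ((y • (1 : Matrix (Fin n) (Fin n) ℝ) - p.1) * Rm (y, p))
        - (Rm (z, p) * (z • (1 : Matrix (Fin n) (Fin n) ℝ) - p.1)) * Rm (y, p) := by
        rw [h1, h2, mul_one, one_mul]
    _ = (Rm (z, p) * ((y • (1 : Matrix (Fin n) (Fin n) ℝ) - p.1)
          - (z • (1 : Matrix (Fin n) (Fin n) ℝ) - p.1))) * Rm (y, p) := by
        noncomm_ring
    _ = (y - z) • (Rm (z, p) * Rm (y, p)) := by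
        rw [hd, mul_smul_comm, mul_one, smul_mul_assoc]

lemma good_nbhd (p : Par n) {y : ℝ} (hy : Good (y, p)) :
    ∀ᶠ z in 𝓝 y, Good (z, p) := by
  have hopen : IsOpen {z : ℝ | Good (z, p)} :=
    isOpen_good.preimage (continuous_id.prodMk continuous_const)
  exact hopen.mem_nhds hy

lemma hasDerivAt_Φ0 (p : Par n) {y : ℝ} (hy : Good (y, p)) :
    HasDerivAt (fun z => Φ0 (z, p)) (Φ1 (y, p)) y := by
  rw [hasDerivAt_iff_tendsto_slope]
  have hS : ContinuousAt
      (fun z : ℝ => -(p.2.2 ⬝ᵥ ((Rm (z, p) * Rm (y, p)) *ᵥ p.2.1))) y := by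
    have hmul : Continuous (fun s : Matrix (Fin n) (Fin n) ℝ × Matrix (Fin n) (Fin n) ℝ =>
        s.1 * s.2) := continuous_fst.matrix_mul continuous_snd
    have hR : ContinuousAt (fun z : ℝ => Rm (z, p)) y := by
      have h' : ContinuousAt (Rm ∘ (fun z : ℝ => (z, p))) y :=
        ContinuousAt.comp (x := y) (f := fun z : ℝ => (z, p))
          (continuousAt_Rm hy) (Continuous.continuousAt (by fun_prop))
      exact h'
    have hRR : ContinuousAt (fun z : ℝ => Rm (z, p) * Rm (y, p)) y :=
      hmul.continuousAt.comp (hR.prodMk continuousAt_const)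
    have hdot : Continuous (fun M : Matrix (Fin n) (Fin n) ℝ => p.2.2 ⬝ᵥ (M *ᵥ p.2.1)) :=
      continuous_const.dotProduct (continuous_id.matrix_mulVec continuous_const)
    exact (hdot.continuousAt.comp hRR).neg
  have hlim : Tendsto (fun z : ℝ => -(p.2.2 ⬝ᵥ ((Rm (z, p) * Rm (y, p)) *ᵥ p.2.1)))
      (𝓝[≠] y) (𝓝 (Φ1 (y, p))) := by
    have h' := hS.tendsto.mono_left (nhdsWithin_le_nhds (s := {y}ᶜ))
    simpa [Φ1] using h'
  refine Tendsto.congr' ?_ hlim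
  filter_upwards [eventually_nhdsWithin_of_eventually_nhds (good_nbhd p hy),
    self_mem_nhdsWithin] with z hz hzy
  have hid := resolvent_id p hy hz
  have hdiff : Φ0 (z, p) - Φ0 (y, p)
      = (y - z) * (p.2.2 ⬝ᵥ ((Rm (z, p) * Rm (y, p)) *ᵥ p.2.1)) := by
    have : Φ0 (z, p) - Φ0 (y, p) = p.2.2 ⬝ᵥ ((Rm (z, p) - Rm (y, p)) *ᵥ p.2.1) := by
      simp [Φ0, Matrix.sub_mulVec, dotProduct_sub]
    rw [this, hid, Matrix.smul_mulVec, dotProduct_smul, smul_eq_mul]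
  have hzy' : z - y ≠ 0 := sub_ne_zero.mpr hzy
  rw [slope_def_field, hdiff]
  field_simp
  ring

lemma hasDerivAt_Φ1 (p : Par n) {y : ℝ} (hy : Good (y, p)) :
    HasDerivAt (fun z => Φ1 (z, p)) (Φ2 (y, p)) y := by
  rw [hasDerivAt_iff_tendsto_slope]
  set S := fun z : ℝ => p.2.2 ⬝ᵥ
      ((Rm (z, p) * (Rm (z, p) * Rm (y, p)) + Rm (z, p) * Rm (y, p) * Rm (y, p)) *ᵥ p.2.1)
    with hSdef
  have hmul : Continuous (fun s : Matrix (Fin n) (Fin n) ℝ × Matrix (Fin n) (Fin n) ℝ =>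
      s.1 * s.2) := continuous_fst.matrix_mul continuous_snd
  have hR : ContinuousAt (fun z : ℝ => Rm (z, p)) y := by
    have h' : ContinuousAt (Rm ∘ (fun z : ℝ => (z, p))) y :=
      ContinuousAt.comp (x := y) (f := fun z : ℝ => (z, p))
        (continuousAt_Rm hy) (Continuous.continuousAt (by fun_prop))
    exact h'
  have hS : ContinuousAt S y := by
    have hRR : ContinuousAt (fun z : ℝ => Rm (z, p) * Rm (y, p)) y :=
      hmul.continuousAt.comp (hR.prodMk continuousAt_const)
    have h1 : ContinuousAt (fun z : ℝ => Rm (z, p) * (Rm (z, p) * Rm (y, p))) y :=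
      hmul.continuousAt.comp (hR.prodMk hRR)
    have h2 : ContinuousAt (fun z : ℝ => Rm (z, p) * Rm (y, p) * Rm (y, p)) y :=
      hmul.continuousAt.comp (hRR.prodMk continuousAt_const)
    have hdot : Continuous (fun M : Matrix (Fin n) (Fin n) ℝ => p.2.2 ⬝ᵥ (M *ᵥ p.2.1)) :=
      continuous_const.dotProduct (continuous_id.matrix_mulVec continuous_const)
    exact hdot.continuousAt.comp (h1.add h2)
  have hSy : S y = Φ2 (y, p) := by
    simp only [hSdef, Φ2]
    rw [← mul_assoc]
    rw [show Rm (y, p) * Rm (y, p) * Rm (y, p) = Rm (y, p) * (Rm (y, p) * Rm (y, p)) by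
      rw [mul_assoc]]
    rw [← two_smul ℝ (Rm (y, p) * (Rm (y, p) * Rm (y, p))), Matrix.smul_mulVec,
      dotProduct_smul, smul_eq_mul]
  have hlim : Tendsto S (𝓝[≠] y) (𝓝 (Φ2 (y, p))) := by
    rw [← hSy]; exact hS.tendsto.mono_left nhdsWithin_le_nhds
  refine Tendsto.congr' ?_ hlim
  filter_upwards [eventually_nhdsWithin_of_eventually_nhds (good_nbhd p hy),
    self_mem_nhdsWithin] with z hz hzy
  have hid := resolvent_id p hy hz
  have hsq : Rm (z, p) * Rm (z, p) - Rm (y, p) * Rm (y, p)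
      = (y - z) • (Rm (z, p) * (Rm (z, p) * Rm (y, p)) + Rm (z, p) * Rm (y, p) * Rm (y, p)) := by
    have expand : Rm (z, p) * Rm (z, p) - Rm (y, p) * Rm (y, p)
        = Rm (z, p) * (Rm (z, p) - Rm (y, p)) + (Rm (z, p) - Rm (y, p)) * Rm (y, p) := by
      rw [mul_sub, sub_mul]; abel
    rw [expand, hid, mul_smul_comm, smul_mul_assoc, ← smul_add, mul_assoc]
  have hdiff : Φ1 (z, p) - Φ1 (y, p) = (z - y) * S z := by
    have h0 : Φ1 (z, p) - Φ1 (y, p)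
        = -(p.2.2 ⬝ᵥ ((Rm (z, p) * Rm (z, p) - Rm (y, p) * Rm (y, p)) *ᵥ p.2.1)) := by
      simp only [Φ1, Matrix.sub_mulVec, dotProduct_sub]
      ring
    rw [h0, hsq, Matrix.smul_mulVec, dotProduct_smul, smul_eq_mul, hSdef]
    ring
  have hzy' : z - y ≠ 0 := sub_ne_zero.mpr hzy
  rw [slope_def_field, hdiff]
  field_simp

lemma deriv_Φ0 (p : Par n) {y : ℝ} (hy : Good (y, p)) :
    deriv (fun z => Φ0 (z, p)) y = Φ1 (y, p) :=
  (hasDerivAt_Φ0 p hy).deriv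

lemma deriv2_Φ0 (p : Par n) {y : ℝ} (hy : Good (y, p)) :
    deriv (deriv (fun z => Φ0 (z, p))) y = Φ2 (y, p) := by
  have hev : deriv (fun z => Φ0 (z, p)) =ᶠ[𝓝 y] fun z => Φ1 (z, p) := by
    filter_upwards [good_nbhd p hy] with z hz
    exact deriv_Φ0 p hz
  rw [hev.deriv_eq]
  exact (hasDerivAt_Φ1 p hy).deriv

lemma sign_of_close {t a : ℝ} (h : |t - a| < |a|) : 0 < t * a := by
  rcases abs_lt.1 h with ⟨h1, h2⟩
  rcases lt_trichotomy a 0 with ha | ha | ha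
  · rw [abs_of_neg ha] at h1 h2; nlinarith
  · simp [ha] at h
    linarith [abs_nonneg t]
  · rw [abs_of_pos ha] at h1 h2; nlinarith

lemma sup_le_euclid (f : Fin n → ℝ) :
    ‖f‖ ≤ ‖(show EuclideanSpace ℝ (Fin n) from WithLp.toLp 2 f)‖ := by
  rw [EuclideanSpace.norm_eq]
  refine (pi_norm_le_iff_of_nonneg (Real.sqrt_nonneg _)).2 fun i => ?_
  have h1 : ‖f i‖ = Real.sqrt (‖f i‖ ^ 2) := by
    rw [Real.sqrt_sq (norm_nonneg _)]
  rw [h1]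
  apply Real.sqrt_le_sqrt
  exact Finset.single_le_sum (fun j _ => sq_nonneg ‖f j‖) (Finset.mem_univ i)

end Stmt10Aux
open Stmt10Aux in
/-- Stability, for real matrices, of a double-eigenvalue obstruction to a
global analytic definition of the eigenvalues: if `Q(x) = 1/τ₀`, `Q'(x) = 0`, `Q''(x) ≠ 0`
at some real `x ∉ σ(A)` and `τ₀ > 0`, the same situation persists (with `x̃` near `x`) for
all sufficiently small real perturbations of `A`, `u` and `v`. -/
theorem stmt10 (n : ℕ) (hn : 1 ≤ n) (A : Matrix (Fin n) (Fin n) ℝ) (u v : Fin n → ℝ)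
    (Q : ℝ → ℝ)
    (hQ : Q = fun x : ℝ => v ⬝ᵥ ((x • (1 : Matrix (Fin n) (Fin n) ℝ) - A)⁻¹ *ᵥ u))
    (x : ℝ) (hx : x ∉ spectrum ℝ A) (τ0 : ℝ) (hτ0 : 0 < τ0)
    (h1 : Q x = 1 / τ0) (h2 : deriv Q x = 0) (h3 : deriv (deriv Q) x ≠ 0) :
    ∀ δ : ℝ, 0 < δ → ∃ ε : ℝ, 0 < ε ∧
      ∀ (A' : Matrix (Fin n) (Fin n) ℝ) (u' v' : Fin n → ℝ),
        ‖A' - A‖ < ε →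
        ‖(show EuclideanSpace ℝ (Fin n) from WithLp.toLp 2 (u' - u))‖ < ε →
        ‖(show EuclideanSpace ℝ (Fin n) from WithLp.toLp 2 (v' - v))‖ < ε →
        ∃ x' : ℝ, x' ∉ spectrum ℝ A' ∧ |x' - x| < δ ∧
          ∃ τ0' : ℝ, 0 < τ0' ∧
            (fun y : ℝ => v' ⬝ᵥ ((y • (1 : Matrix (Fin n) (Fin n) ℝ) - A')⁻¹ *ᵥ u')) x'
              = 1 / τ0' ∧
            deriv (fun y : ℝ =>
              v' ⬝ᵥ ((y • (1 : Matrix (Fin n) (Fin n) ℝ) - A')⁻¹ *ᵥ u')) x' = 0 ∧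
            deriv (deriv (fun y : ℝ =>
              v' ⬝ᵥ ((y • (1 : Matrix (Fin n) (Fin n) ℝ) - A')⁻¹ *ᵥ u'))) x' ≠ 0 := by
  intro δ hδ
  set p0 : Par n := (A, u, v) with hp0
  have hQ' : Q = fun y : ℝ => Φ0 (y, p0) := hQ
  have hGoodx : Good (x, p0) := by
    have hxu : IsUnit (x • (1 : Matrix (Fin n) (Fin n) ℝ) - A) := by
      rw [spectrum.notMem_iff, Algebra.algebraMap_eq_smul_one] at hx
      exact hx
    exact (Matrix.isUnit_iff_isUnit_det _).mp hxu
  rw [hQ'] at h1 h2 h3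
  have hΦ1x : Φ1 (x, p0) = 0 := by rw [← deriv_Φ0 p0 hGoodx]; exact h2
  have hΦ2x : Φ2 (x, p0) ≠ 0 := by rw [← deriv2_Φ0 p0 hGoodx]; exact h3
  have hΦ0x : Φ0 (x, p0) = 1 / τ0 := h1
  set U : Set (ℝ × Par n) := {q | Good q ∧ Φ2 q ≠ 0 ∧ 0 < Φ0 q} with hUdef
  have hUopen : IsOpen U := by
    have hc2 : ContinuousOn Φ2 {q : ℝ × Par n | Good q} :=
      fun q hq => (continuousAt_Φ2 hq).continuousWithinAt
    have hc0 : ContinuousOn Φ0 {q : ℝ × Par n | Good q} :=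
      fun q hq => (continuousAt_Φ0 hq).continuousWithinAt
    have ho1 : IsOpen ({q : ℝ × Par n | Good q} ∩ Φ2 ⁻¹' {t : ℝ | t ≠ 0}) :=
      hc2.isOpen_inter_preimage isOpen_good isOpen_ne
    have ho2 : IsOpen ({q : ℝ × Par n | Good q} ∩ Φ0 ⁻¹' Set.Ioi 0) :=
      hc0.isOpen_inter_preimage isOpen_good isOpen_Ioi
    have hEq : U = ({q : ℝ × Par n | Good q} ∩ Φ2 ⁻¹' {t : ℝ | t ≠ 0})
        ∩ ({q : ℝ × Par n | Good q} ∩ Φ0 ⁻¹' Set.Ioi 0) := by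
      ext q
      simp only [hUdef, Set.mem_setOf_eq, Set.mem_inter_iff, Set.mem_preimage,
        Set.mem_Ioi, Set.mem_setOf_eq]
      tauto
    rw [hEq]; exact ho1.inter ho2
  have hxU : (x, p0) ∈ U := ⟨hGoodx, hΦ2x, by rw [hΦ0x]; positivity⟩
  -- slope control near x
  have hd1 := hasDerivAt_Φ1 p0 hGoodx
  rw [hasDerivAt_iff_tendsto_slope] at hd1
  have hball' : ∀ᶠ t in 𝓝 (Φ2 (x, p0)), |t - Φ2 (x, p0)| < |Φ2 (x, p0)| := by
    filter_upwards [Metric.ball_mem_nhds (Φ2 (x, p0)) (abs_pos.mpr hΦ2x)] with t ht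
    simpa [Real.dist_eq] using ht
  have hslope : ∀ᶠ z in 𝓝[≠] x,
      |slope (fun w => Φ1 (w, p0)) x z - Φ2 (x, p0)| < |Φ2 (x, p0)| := hd1.eventually hball'
  rw [eventually_nhdsWithin_iff] at hslope
  obtain ⟨r1, hr1, hr1'⟩ := Metric.eventually_nhds_iff.mp hslope
  have hUx : ∀ᶠ z in 𝓝 x, (z, p0) ∈ U := by
    have : IsOpen {z : ℝ | (z, p0) ∈ U} :=
      hUopen.preimage (by fun_prop : Continuous fun z : ℝ => (z, p0))
    exact this.mem_nhds hxU
  obtain ⟨r2, hr2, hr2'⟩ := Metric.eventually_nhds_iff.mp hUx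
  set h : ℝ := min (min r1 r2) δ / 2 with hhdef
  have hhpos : 0 < h := by positivity
  have hhr1 : h < r1 := by
    have : min (min r1 r2) δ ≤ r1 := le_trans (min_le_left _ _) (min_le_left _ _)
    simp only [hhdef]; linarith
  have hhr2 : h < r2 := by
    have : min (min r1 r2) δ ≤ r2 := le_trans (min_le_left _ _) (min_le_right _ _)
    simp only [hhdef]; linarith
  have hhδ : h < δ := by
    have : min (min r1 r2) δ ≤ δ := min_le_right _ _
    simp only [hhdef]; linarith
  set c : ℝ := Φ2 (x, p0) with hcdef
  set sp : ℝ := Φ1 (x + h, p0) with hspdef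
  set sm : ℝ := Φ1 (x - h, p0) with hsmdef
  have hsp' : 0 < sp / h * c := by
    have hd : dist (x + h) x < r1 := by
      rw [Real.dist_eq]; rw [show x + h - x = h by ring, abs_of_pos hhpos]; exact hhr1
    have hne : (x + h) ∈ ({x}ᶜ : Set ℝ) := by
      simp only [Set.mem_compl_iff, Set.mem_singleton_iff]
      intro hc'; nlinarith
    have := hr1' hd hne
    rw [slope_def_field, hΦ1x, sub_zero, show x + h - x = h by ring] at this
    exact sign_of_close this
  have hsm' : 0 < sm / (-h) * c := by
    have hd : dist (x - h) x < r1 := by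
      rw [Real.dist_eq]; rw [show x - h - x = -h by ring, abs_neg, abs_of_pos hhpos]; exact hhr1
    have hne : (x - h) ∈ ({x}ᶜ : Set ℝ) := by
      simp only [Set.mem_compl_iff, Set.mem_singleton_iff]
      intro hc'; nlinarith
    have := hr1' hd hne
    rw [slope_def_field, hΦ1x, sub_zero, show x - h - x = -h by ring] at this
    exact sign_of_close this
  have hspc : 0 < sp * c := by
    have e : sp / h * c = sp * c / h := by ring
    rw [e, div_pos_iff] at hsp'
    rcases hsp' with ⟨h1, _⟩ | ⟨_, h2⟩
    · exact h1
    · linarith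
  have hsmc : sm * c < 0 := by
    have e : sm / (-h) * c = -(sm * c / h) := by ring
    rw [e] at hsm'
    have hneg : sm * c / h < 0 := by linarith
    rw [div_neg_iff] at hneg
    rcases hneg with ⟨_, h2⟩ | ⟨h1, _⟩
    · linarith
    · exact h1
  have hprod : sp * sm < 0 := by nlinarith [mul_pos hspc (neg_pos.mpr hsmc), sq_nonneg c]
  have hspne : sp ≠ 0 := by intro h0; rw [h0] at hprod; simp at hprod
  have hsmne : sm ≠ 0 := by intro h0; rw [h0] at hprod; simp at hprod
  -- tube lemma
  have hIccU : ∀ y ∈ Set.Icc (x - h) (x + h), (y, p0) ∈ U := by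
    intro y hy
    apply hr2'
    rw [Real.dist_eq, abs_lt]
    obtain ⟨hy1, hy2⟩ := hy
    constructor <;> linarith
  have hKU : (Set.Icc (x - h) (x + h)) ×ˢ ({p0} : Set (Par n)) ⊆ U := by
    rintro ⟨y, p⟩ ⟨hy, hp⟩
    rw [Set.mem_singleton_iff] at hp
    subst hp
    exact hIccU y hy
  obtain ⟨V, W, hVopen, hWopen, hKV, hpW, hVW⟩ :=
    generalized_tube_lemma isCompact_Icc isCompact_singleton hUopen hKU
  have hp0W : p0 ∈ W := hpW rfl
  obtain ⟨ε1, hε1, hball1⟩ := Metric.isOpen_iff.mp hWopen p0 hp0W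
  -- endpoint continuity in the parameter
  have hGoodp : Good (x + h, p0) := (hIccU _ (by constructor <;> nlinarith)).1
  have hGoodm : Good (x - h, p0) := (hIccU _ (by constructor <;> nlinarith)).1
  have hcp : ContinuousAt (fun p : Par n => Φ1 (x + h, p)) p0 := by
    have h' : ContinuousAt (Φ1 ∘ (fun p : Par n => (x + h, p))) p0 :=
      ContinuousAt.comp (x := p0) (f := fun p : Par n => (x + h, p))
        (continuousAt_Φ1 hGoodp) (Continuous.continuousAt (by fun_prop))
    exact h'
  have hcm : ContinuousAt (fun p : Par n => Φ1 (x - h, p)) p0 := by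
    have h' : ContinuousAt (Φ1 ∘ (fun p : Par n => (x - h, p))) p0 :=
      ContinuousAt.comp (x := p0) (f := fun p : Par n => (x - h, p))
        (continuousAt_Φ1 hGoodm) (Continuous.continuousAt (by fun_prop))
    exact h'
  have hevp : ∀ᶠ p' in 𝓝 p0, |Φ1 (x + h, p') - sp| < |sp| := by
    refine hcp.eventually (p := fun t => |t - sp| < |sp|) ?_
    filter_upwards [Metric.ball_mem_nhds sp (abs_pos.mpr hspne)] with t ht
    simpa [Real.dist_eq] using ht
  have hevm : ∀ᶠ p' in 𝓝 p0, |Φ1 (x - h, p') - sm| < |sm| := by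
    refine hcm.eventually (p := fun t => |t - sm| < |sm|) ?_
    filter_upwards [Metric.ball_mem_nhds sm (abs_pos.mpr hsmne)] with t ht
    simpa [Real.dist_eq] using ht
  obtain ⟨ε2, hε2, hε2'⟩ := Metric.eventually_nhds_iff.mp hevp
  obtain ⟨ε3, hε3, hε3'⟩ := Metric.eventually_nhds_iff.mp hevm
  refine ⟨min ε1 (min ε2 ε3), by positivity, ?_⟩
  intro A' u' v' hA' hu' hv'
  set p' : Par n := (A', u', v') with hp'
  have hdist : dist p' p0 < min ε1 (min ε2 ε3) := by
    rw [Prod.dist_eq, Prod.dist_eq]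
    refine max_lt ?_ (max_lt ?_ ?_)
    · rw [dist_eq_norm]; exact hA'
    · rw [dist_eq_norm]
      exact lt_of_le_of_lt (sup_le_euclid (u' - u)) hu'
    · rw [dist_eq_norm]
      exact lt_of_le_of_lt (sup_le_euclid (v' - v)) hv'
  have hp'W : p' ∈ W := hball1 (lt_of_lt_of_le hdist (min_le_left _ _))
  have htp : 0 < Φ1 (x + h, p') * sp :=
    sign_of_close (hε2' (lt_of_lt_of_le hdist (le_trans (min_le_right _ _) (min_le_left _ _))))
  have htm : 0 < Φ1 (x - h, p') * sm :=
    sign_of_close (hε3' (lt_of_lt_of_le hdist (le_trans (min_le_right _ _) (min_le_right _ _))))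
  have hprod' : Φ1 (x + h, p') * Φ1 (x - h, p') < 0 := by
    nlinarith [mul_pos htp htm]
  have hcf : ContinuousOn (fun y : ℝ => Φ1 (y, p')) (Set.Icc (x - h) (x + h)) := by
    intro y hy
    have hyU : (y, p') ∈ U := hVW ⟨hKV hy, hp'W⟩
    have h' : ContinuousAt (Φ1 ∘ (fun z : ℝ => (z, p'))) y :=
      ContinuousAt.comp (x := y) (f := fun z : ℝ => (z, p'))
        (continuousAt_Φ1 hyU.1) (Continuous.continuousAt (by fun_prop))
    exact h'.continuousWithinAt
  have hab : x - h ≤ x + h := by linarith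
  have hIVT : ∃ x' ∈ Set.Ioo (x - h) (x + h), Φ1 (x', p') = 0 := by
    rcases lt_trichotomy (Φ1 (x - h, p')) 0 with hlt | heq | hgt
    · have hgt' : 0 < Φ1 (x + h, p') := by nlinarith
      have h0 : (0 : ℝ) ∈ Set.Ioo (Φ1 (x - h, p')) (Φ1 (x + h, p')) := ⟨hlt, hgt'⟩
      obtain ⟨x', hx'mem, hx'eq⟩ := intermediate_value_Ioo hab hcf h0
      exact ⟨x', hx'mem, hx'eq⟩
    · rw [heq] at hprod'; simp at hprod'
    · have hlt' : Φ1 (x + h, p') < 0 := by nlinarith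
      have h0 : (0 : ℝ) ∈ Set.Ioo (Φ1 (x + h, p')) (Φ1 (x - h, p')) := ⟨hlt', hgt⟩
      obtain ⟨x', hx'mem, hx'eq⟩ := intermediate_value_Ioo' hab hcf h0
      exact ⟨x', hx'mem, hx'eq⟩
  obtain ⟨x', hx'mem, hx'eq⟩ := hIVT
  have hx'U : (x', p') ∈ U := hVW ⟨hKV (Set.Ioo_subset_Icc_self hx'mem), hp'W⟩
  have hUnit : IsUnit (x' • (1 : Matrix (Fin n) (Fin n) ℝ) - A') :=
    (Matrix.isUnit_iff_isUnit_det _).mpr hx'U.1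
  have hfun : (fun y : ℝ => v' ⬝ᵥ ((y • (1 : Matrix (Fin n) (Fin n) ℝ) - A')⁻¹ *ᵥ u'))
      = fun y : ℝ => Φ0 (y, p') := rfl
  refine ⟨x', ?_, ?_, (Φ0 (x', p'))⁻¹, inv_pos.mpr hx'U.2.2, ?_, ?_, ?_⟩
  · exact spectrum.notMem_iff.mpr (by rw [Algebra.algebraMap_eq_smul_one]; exact hUnit)
  · rw [abs_sub_lt_iff]
    exact ⟨by linarith [hx'mem.2], by linarith [hx'mem.1]⟩
  · rw [hfun, one_div, inv_inv]
  · rw [hfun, deriv_Φ0 p' hx'U.1]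
    exact hx'eq
  · rw [hfun, deriv2_Φ0 p' hx'U.1]
    exact hx'U.2.1
end

section
/- Let A ∈ ℝ^{n×n} have no real eigenvalues, and let u, v ∈ ℝ^n be nonzero vectors such that the function Q(λ) = v^⊤(λI_n − A)^{-1}u is not identically zero on ℝ. Then there exist x ∈ ℝ and τ_0 ∈ ℝ ∖ {0} such that Q(x) = 1/τ_0 and Q'(x) = 0; equivalently, Q has a critical point x ∈ ℝ at which Q(x) ≠ 0. -/
open Matrix Polynomial Filter

private lemma keyMax (f : ℝ → ℝ) (hf : Continuous f)
    (h0 : Tendsto f (cocompact ℝ) (nhds 0)) (x₀ : ℝ) (hx : 0 < f x₀) :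
    ∃ x : ℝ, 0 < f x ∧ deriv f x = 0 := by
  have hev : ∀ᶠ x in cocompact ℝ, f x < f x₀ := h0.eventually_lt_const hx
  obtain ⟨K, hKc, hK⟩ := mem_cocompact.mp hev
  have hx₀K : x₀ ∈ K := by
    by_contra h
    simpa using hK h
  obtain ⟨x, hxK, hmax⟩ := hKc.exists_isMaxOn ⟨x₀, hx₀K⟩ hf.continuousOn
  have hglobal : ∀ y, f y ≤ f x := by
    intro y
    by_cases hy : y ∈ K
    · exact hmax hy
    · exact le_trans (le_of_lt (hK hy)) (hmax hx₀K)
  refine ⟨x, lt_of_lt_of_le hx (hmax hx₀K), ?_⟩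
  have hloc : IsLocalMax f x :=
    IsMaxOn.isLocalMax (isMaxOn_iff.mpr fun y _ => hglobal y) Filter.univ_mem
  exact hloc.deriv_eq_zero

/-- If the real matrix `A` has no real eigenvalues and `u, v` are nonzero
real vectors with `Q(λ) = v^⊤(λI − A)⁻¹u` not identically zero on `ℝ`, then `Q` has a real
critical point `x` with `Q(x) ≠ 0`, i.e. `Q(x) = 1/τ₀` for some `τ₀ ≠ 0` and `Q'(x) = 0`. -/
theorem stmt11 (n : ℕ) (hn : 1 ≤ n) (A : Matrix (Fin n) (Fin n) ℝ)
    (hA : spectrum ℝ A = ∅) (u v : Fin n → ℝ) (hu : u ≠ 0) (hv : v ≠ 0)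
    (Q : ℝ → ℝ)
    (hQ : Q = fun x : ℝ => v ⬝ᵥ ((x • (1 : Matrix (Fin n) (Fin n) ℝ) - A)⁻¹ *ᵥ u))
    (hQne : ∃ x : ℝ, Q x ≠ 0) :
    ∃ x : ℝ, ∃ τ0 : ℝ, τ0 ≠ 0 ∧ Q x = 1 / τ0 ∧ deriv Q x = 0 := by
  set M : ℝ → Matrix (Fin n) (Fin n) ℝ :=
    fun x => x • (1 : Matrix (Fin n) (Fin n) ℝ) - A with hM
  set N : Matrix (Fin n) (Fin n) ℝ[X] := charmatrix A with hNdef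
  set q : ℝ[X] := A.charpoly with hqdef
  set p : ℝ[X] := ∑ i : Fin n, ∑ j : Fin n, C (v i) * (adjugate N i j * C (u j)) with hpdef
  -- every M x is invertible
  have hunit : ∀ x : ℝ, IsUnit (M x) := by
    intro x
    have hx : x ∉ spectrum ℝ A := by rw [hA]; exact Set.notMem_empty x
    rw [spectrum.notMem_iff] at hx
    rwa [Algebra.algebraMap_eq_smul_one] at hx
  have hdet : ∀ x : ℝ, (M x).det ≠ 0 := by
    intro x
    have := (Matrix.isUnit_iff_isUnit_det (M x)).mp (hunit x)
    exact this.ne_zero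
  -- evaluation of charmatrix
  have hmap : ∀ x : ℝ, N.map (Polynomial.eval x) = M x := by
    intro x
    ext i j
    by_cases h : i = j
    · subst h
      simp [hNdef, hM, Matrix.sub_apply, Matrix.smul_apply, Matrix.one_apply]
    · simp [hNdef, hM, charmatrix_apply_ne _ _ _ h, Matrix.sub_apply, Matrix.smul_apply,
        Matrix.one_apply, h]
  have heval_q : ∀ x : ℝ, q.eval x = (M x).det := by
    intro x
    have h1 : q = N.det := by rw [hqdef, hNdef]; rfl
    rw [h1,
      show Polynomial.eval x N.det = ((evalRingHom x).mapMatrix N).det from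
        (evalRingHom x).map_det N,
      RingHom.mapMatrix_apply,
      show N.map (evalRingHom x) = N.map (Polynomial.eval x) from rfl, hmap x]
  have hadj : ∀ (x : ℝ) (i j : Fin n),
      (adjugate N i j).eval x = adjugate (M x) i j := by
    intro x i j
    have h2 := (evalRingHom x).map_adjugate N
    rw [RingHom.mapMatrix_apply, RingHom.mapMatrix_apply, Polynomial.coe_evalRingHom,
      hmap x] at h2
    rw [← h2]
    simp [Matrix.map_apply]
  have heval_p : ∀ x : ℝ, p.eval x = v ⬝ᵥ (adjugate (M x) *ᵥ u) := by
    intro x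
    rw [hpdef]
    simp only [eval_finset_sum, eval_mul, eval_C, hadj x]
    simp [dotProduct, Matrix.mulVec, Finset.mul_sum, mul_assoc]
  have hQ' : ∀ x : ℝ, Q x = p.eval x / q.eval x := by
    intro x
    rw [hQ]
    show v ⬝ᵥ ((M x)⁻¹ *ᵥ u) = _
    rw [Matrix.inv_def, Ring.inverse_eq_inv', Matrix.smul_mulVec,
      dotProduct_smul, heval_p, heval_q]
    simp [div_eq_inv_mul]
  -- degrees
  have hqnat : q.natDegree = n := by
    rw [hqdef]
    simpa using A.charpoly_natDegree_eq_dim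
  have hqne : q ≠ 0 := (A.charpoly_monic).ne_zero
  have hqdeg : q.degree = (n : WithBot ℕ) := by
    rw [Polynomial.degree_eq_natDegree hqne, hqnat]
  have hadjdeg : ∀ i j : Fin n, (adjugate N i j).natDegree ≤ n - 1 := by
    intro i j
    rw [Matrix.adjugate_apply, Matrix.det_apply']
    refine natDegree_sum_le_of_forall_le _ _ ?_
    intro σ _
    refine natDegree_mul_le.trans ?_
    rw [Polynomial.natDegree_intCast, zero_add]
    refine (natDegree_prod_le _ _).trans ?_
    have hb : ∀ k : Fin n,
        ((N.updateRow j (Pi.single i 1)) (σ k) k).natDegree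
          ≤ if σ k = j then 0 else 1 := by
      intro k
      by_cases h : σ k = j
      · rw [h, Matrix.updateRow_self]
        have h0 : ((Pi.single i 1 : Fin n → ℝ[X]) k).natDegree = 0 := by
          rcases eq_or_ne k i with rfl | hk
          · simp
          · simp [Pi.single_eq_of_ne hk]
        simp [h0]
      · rw [Matrix.updateRow_ne h, if_neg h]
        by_cases hk : σ k = k
        · rw [hNdef, hk, charmatrix_apply_eq]
          refine (natDegree_sub_le _ _).trans ?_
          simp
        · rw [hNdef, charmatrix_apply_ne _ _ _ hk]
          simp
    calc ∑ k, ((N.updateRow j (Pi.single i 1)) (σ k) k).natDegree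
        ≤ ∑ k : Fin n, (if σ k = j then 0 else 1) :=
          Finset.sum_le_sum fun k _ => hb k
      _ ≤ n - 1 := by
          set c : Fin n := σ.symm j with hc
          have hsum := Finset.sum_erase_add Finset.univ
            (fun k => if σ k = j then 0 else 1) (Finset.mem_univ c)
          have hc0 : (fun k => if σ k = j then (0 : ℕ) else 1) c = 0 := by
            simp only [hc]
            rw [if_pos (σ.apply_symm_apply j)]
          rw [← hsum, show (if σ c = j then (0 : ℕ) else 1) = 0 from hc0, add_zero]
          refine le_trans (Finset.sum_le_card_nsmul _ _ 1 ?_) ?_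
          · intro k _
            by_cases hkj : σ k = j <;> simp [hkj]
          · rw [Finset.card_erase_of_mem (Finset.mem_univ c), Finset.card_univ,
              Fintype.card_fin, smul_eq_mul, mul_one]
  have hpnat : p.natDegree ≤ n - 1 := by
    rw [hpdef]
    refine natDegree_sum_le_of_forall_le _ _ ?_
    intro i _
    refine natDegree_sum_le_of_forall_le _ _ ?_
    intro j _
    refine natDegree_mul_le.trans ?_
    rw [natDegree_C, zero_add]
    refine natDegree_mul_le.trans ?_
    rw [natDegree_C, add_zero]
    exact hadjdeg i j
  have hcastlt : ((n - 1 : ℕ) : WithBot ℕ) < ((n : ℕ) : WithBot ℕ) := by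
    exact_mod_cast (by omega : n - 1 < n)
  have hplt : p.degree < q.degree := by
    have h1 : p.degree ≤ ((n - 1 : ℕ) : WithBot ℕ) :=
      degree_le_natDegree.trans (by exact_mod_cast hpnat)
    exact lt_of_le_of_lt h1 (hqdeg ▸ hcastlt)
  have hqev : ∀ x : ℝ, q.eval x ≠ 0 := fun x => by rw [heval_q x]; exact hdet x
  -- continuity
  have hcont : Continuous Q := by
    have : Continuous fun x : ℝ => p.eval x / q.eval x :=
      (Polynomial.continuous p).div (Polynomial.continuous q) hqev
    exact (funext hQ' : Q = _) ▸ this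
  -- tendsto at cocompact
  have htop : Tendsto Q atTop (nhds 0) := by
    refine Tendsto.congr (fun x => (hQ' x).symm) ?_
    exact Polynomial.div_tendsto_zero_of_degree_lt p q hplt
  have hbot : Tendsto Q atBot (nhds 0) := by
    set p' : ℝ[X] := p.comp (-X) with hp'
    set q' : ℝ[X] := q.comp (-X) with hq'
    have hnegdeg : (-X : ℝ[X]).natDegree = 1 := by simp
    have hq'ne : q' ≠ 0 := by
      intro h
      have : q'.eval 0 = 0 := by rw [h]; simp
      rw [hq', eval_comp] at this
      simp at this
      exact hqev _ this
    have hq'nat : q'.natDegree = n := by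
      rw [hq', natDegree_comp, hnegdeg, mul_one, hqnat]
    have hp'lt : p'.degree < q'.degree := by
      have hnle : p'.natDegree ≤ n - 1 := by
        rw [hp', natDegree_comp, hnegdeg, mul_one]; exact hpnat
      have h1 : p'.degree ≤ ((n - 1 : ℕ) : WithBot ℕ) :=
        degree_le_natDegree.trans (by exact_mod_cast hnle)
      have h2 : q'.degree = ((n : ℕ) : WithBot ℕ) := by
        rw [Polynomial.degree_eq_natDegree hq'ne, hq'nat]
      exact lt_of_le_of_lt h1 (h2 ▸ hcastlt)
    have h1 : Tendsto (fun x : ℝ => p'.eval x / q'.eval x) atTop (nhds 0) :=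
      Polynomial.div_tendsto_zero_of_degree_lt p' q' hp'lt
    have h2 : Tendsto (fun x : ℝ => Q (-x)) atTop (nhds 0) := by
      refine Tendsto.congr (fun x => ?_) h1
      rw [hp', hq', eval_comp, eval_comp, hQ' (-x)]
      simp
    have h3 := h2.comp tendsto_neg_atBot_atTop
    refine Tendsto.congr (fun x => ?_) h3
    simp
  have hco : Tendsto Q (cocompact ℝ) (nhds 0) := by
    rw [cocompact_eq_atBot_atTop, tendsto_sup]
    exact ⟨hbot, htop⟩
  -- conclude via max/min
  obtain ⟨x₀, hx₀⟩ := hQne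
  rcases hx₀.lt_or_gt with hneg | hpos
  · obtain ⟨x, hxpos, hxderiv⟩ := keyMax (fun y => -Q y) hcont.neg
      (by simpa using hco.neg) x₀ (by show 0 < -Q x₀; linarith)
    refine ⟨x, (Q x)⁻¹, ?_, ?_, ?_⟩
    · intro h
      rw [inv_eq_zero] at h
      rw [h] at hxpos
      simp at hxpos
    · rw [one_div, inv_inv]
    · have := deriv.neg (f := Q) (x := x)
      change deriv (fun y => -Q y) x = -deriv Q x at this
      rw [hxderiv] at this
      linarith [this]
  · obtain ⟨x, hxpos, hxderiv⟩ := keyMax Q hcont hco x₀ hpos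
    refine ⟨x, (Q x)⁻¹, ?_, ?_, hxderiv⟩
    · exact inv_ne_zero (ne_of_gt hxpos)
    · rw [one_div, inv_inv]
end

section
/- Assume that for some κ ∈ {0, 1, …, l−1} one has v^*A^j u = 0 for j = 0, …, κ−1 and v^*A^κ u ≠ 0. Then the polynomial p_{uv} has degree exactly l − κ − 1, and its leading coefficient equals v^*A^κ u. -/
open Matrix Polynomial

/-- If `v^*Aʲu = 0` for `j = 0, …, κ−1` and `v^*Aᵏu ≠ 0` for some
`κ ∈ {0, …, l−1}`, then `p_uv` has degree exactly `l − κ − 1` and leading coefficient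
`v^*Aᵏu`. -/
theorem stmt13 (n : ℕ) (hn : 1 ≤ n) (A : Matrix (Fin n) (Fin n) ℂ) (u v : Fin n → ℂ)
    (p : Polynomial ℂ)
    (hp : ∀ z : ℂ, z ∉ spectrum ℂ A →
      p.eval z = (minpoly ℂ A).eval z *
        (star v ⬝ᵥ ((z • (1 : Matrix (Fin n) (Fin n) ℂ) - A)⁻¹ *ᵥ u)))
    (hdeg : p.degree ≤ ((minpoly ℂ A).natDegree - 1 : ℕ))
    (κ : ℕ) (hκl : κ < (minpoly ℂ A).natDegree)
    (hmom : ∀ j : ℕ, j < κ → star v ⬝ᵥ ((A ^ j) *ᵥ u) = 0)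
    (hκ : star v ⬝ᵥ ((A ^ κ) *ᵥ u) ≠ 0) :
    p.degree = ((minpoly ℂ A).natDegree - κ - 1 : ℕ) ∧
      p.leadingCoeff = star v ⬝ᵥ ((A ^ κ) *ᵥ u) := by
  haveI : NeZero n := ⟨by omega⟩
  set m := minpoly ℂ A with hm
  set l := m.natDegree with hl
  have hint : IsIntegral ℂ A := Algebra.IsIntegral.isIntegral A
  have hmonic : m.Monic := minpoly.monic hint
  have hm0 : m ≠ 0 := hmonic.ne_zero
  set μ : ℕ → ℂ := fun t => star v ⬝ᵥ ((A ^ t) *ᵥ u) with hμdef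
  set d : ℕ := l - κ - 1 with hd
  have hmomμ : ∀ j : ℕ, j < κ → μ j = 0 := fun j h => hmom j h
  have hκμ : μ κ ≠ 0 := hκ
  -- the linear functional
  set F : Matrix (Fin n) (Fin n) ℂ → ℂ := fun M => star v ⬝ᵥ (M *ᵥ u) with hF
  have Fsum : ∀ (s : Finset ℕ) (f : ℕ → Matrix (Fin n) (Fin n) ℂ),
      F (∑ j ∈ s, f j) = ∑ j ∈ s, F (f j) := by
    intro s f
    induction s using Finset.induction_on with
    | empty => simp [hF]
    | insert _ _ h ih => simp only [hF] at ih; simp [hF, Finset.sum_insert h, Matrix.add_mulVec, dotProduct_add,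
        ← ih]
  have Fsmul : ∀ (c : ℂ) (M : Matrix (Fin n) (Fin n) ℂ), F (c • M) = c * F M := by
    intro c M
    simp [hF, Matrix.smul_mulVec, dotProduct_smul, smul_eq_mul]
  -- the polynomial q
  set q : Polynomial ℂ := ∑ j ∈ Finset.range (l + 1), C (m.coeff j) *
      ∑ i ∈ Finset.range j, C (μ (j - 1 - i)) * X ^ i with hq
  -- p = q
  have hsp_fin : (spectrum ℂ A).Finite := by
    refine (Polynomial.finite_setOf_isRoot hm0).subset ?_
    intro z hz
    have h0 : (Polynomial.aeval A) m = 0 := minpoly.aeval ℂ A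
    have := spectrum.subset_polynomial_aeval A m ⟨z, hz, rfl⟩
    rw [h0, spectrum.zero_eq] at this
    simpa [Polynomial.IsRoot] using this
  have hpq : p = q := by
    apply Polynomial.eq_of_infinite_eval_eq
    refine hsp_fin.infinite_compl.mono ?_
    intro z hz
    have hzu : IsUnit (z • (1 : Matrix (Fin n) (Fin n) ℂ) - A) := by
      by_contra hcon
      exact hz (by rwa [spectrum.mem_iff, Algebra.algebraMap_eq_smul_one])
    set x : Matrix (Fin n) (Fin n) ℂ := z • 1 with hx
    set B : Matrix (Fin n) (Fin n) ℂ := ∑ j ∈ Finset.range (l + 1), m.coeff j •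
        ∑ i ∈ Finset.range j, x ^ i * A ^ (j - 1 - i) with hB
    have hcomm : Commute x A := by
      simp [hx, Commute, SemiconjBy, Matrix.smul_mul, Matrix.mul_smul]
    have key : (x - A) * B = m.eval z • 1 := by
      rw [hB, Finset.mul_sum]
      have : ∀ j ∈ Finset.range (l + 1),
          (x - A) * (m.coeff j • ∑ i ∈ Finset.range j, x ^ i * A ^ (j - 1 - i))
            = m.coeff j • (x ^ j - A ^ j) := by
        intro j _
        rw [Matrix.mul_smul, hcomm.mul_geom_sum₂ j]
      rw [Finset.sum_congr rfl this]
      have hev : m.eval z • (1 : Matrix (Fin n) (Fin n) ℂ)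
          = ∑ j ∈ Finset.range (l + 1), m.coeff j • x ^ j := by
        rw [Polynomial.eval_eq_sum_range, Finset.sum_smul]
        congr 1
        ext j
        rw [hx, _root_.smul_pow, one_pow, smul_smul]
      have haev : (0 : Matrix (Fin n) (Fin n) ℂ)
          = ∑ j ∈ Finset.range (l + 1), m.coeff j • A ^ j := by
        rw [← Polynomial.aeval_eq_sum_range, minpoly.aeval]
      rw [hev]
      calc ∑ j ∈ Finset.range (l + 1), m.coeff j • (x ^ j - A ^ j)
          = ∑ j ∈ Finset.range (l + 1), (m.coeff j • x ^ j - m.coeff j • A ^ j) := by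
            simp [smul_sub]
        _ = ∑ j ∈ Finset.range (l + 1), m.coeff j • x ^ j
            - ∑ j ∈ Finset.range (l + 1), m.coeff j • A ^ j := Finset.sum_sub_distrib _ _
        _ = ∑ j ∈ Finset.range (l + 1), m.coeff j • x ^ j := by rw [← haev, sub_zero]
    have hinv : m.eval z • ((x - A)⁻¹) = B := by
      have hud : IsUnit (x - A).det := (Matrix.isUnit_iff_isUnit_det _).mp hzu
      calc m.eval z • (x - A)⁻¹ = (x - A)⁻¹ * (m.eval z • 1) := by
            rw [Matrix.mul_smul, Matrix.mul_one]
        _ = (x - A)⁻¹ * ((x - A) * B) := by rw [key]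
        _ = ((x - A)⁻¹ * (x - A)) * B := by rw [Matrix.mul_assoc]
        _ = B := by rw [Matrix.nonsing_inv_mul _ hud, Matrix.one_mul]
    have hval : p.eval z = F B := by
      rw [hp z hz, ← hinv, Fsmul]
    rw [Set.mem_setOf_eq, hval, hB, Fsum]
    have hterm : ∀ j ∈ Finset.range (l + 1),
        F (m.coeff j • ∑ i ∈ Finset.range j, x ^ i * A ^ (j - 1 - i))
          = m.coeff j * ∑ i ∈ Finset.range j, z ^ i * μ (j - 1 - i) := by
      intro j _
      rw [Fsmul]
      congr 1
      have : ∀ i ∈ Finset.range j, x ^ i * A ^ (j - 1 - i) = z ^ i • A ^ (j - 1 - i) := by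
        intro i _
        rw [hx, _root_.smul_pow, one_pow, Matrix.smul_mul, Matrix.one_mul]
      rw [Finset.sum_congr rfl this, Fsum]
      refine Finset.sum_congr rfl fun i _ => ?_
      rw [Fsmul]
    rw [Finset.sum_congr rfl hterm, hq, Polynomial.eval_finset_sum]
    refine Finset.sum_congr rfl fun j _ => ?_
    rw [Polynomial.eval_mul, Polynomial.eval_C, Polynomial.eval_finset_sum]
    congr 1
    refine Finset.sum_congr rfl fun i _ => ?_
    rw [Polynomial.eval_mul, Polynomial.eval_C, Polynomial.eval_pow, Polynomial.eval_X, mul_comm]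
  -- coefficients of q
  have hcoeff : ∀ k : ℕ, q.coeff k
      = ∑ j ∈ Finset.range (l + 1), if k < j then m.coeff j * μ (j - 1 - k) else 0 := by
    intro k
    rw [hq, Polynomial.finset_sum_coeff]
    refine Finset.sum_congr rfl fun j _ => ?_
    rw [Polynomial.coeff_C_mul, Polynomial.finset_sum_coeff]
    have : ∀ i ∈ Finset.range j, (C (μ (j - 1 - i)) * X ^ i).coeff k
        = if i = k then μ (j - 1 - i) else 0 := by
      intro i _
      rw [Polynomial.coeff_C_mul, Polynomial.coeff_X_pow]
      by_cases h : k = i <;> simp [h, eq_comm]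
    rw [Finset.sum_congr rfl this, Finset.sum_ite_eq' (Finset.range j) k
      (fun i => μ (j - 1 - i))]
    simp only [Finset.mem_range]
    by_cases h : k < j <;> simp [h, mul_ite]
  have hcd : q.coeff d = μ κ := by
    rw [hcoeff d, Finset.sum_range_succ]
    have h1 : ∀ j ∈ Finset.range l, (if d < j then m.coeff j * μ (j - 1 - d) else 0) = 0 := by
      intro j hj
      rw [Finset.mem_range] at hj
      by_cases h : d < j
      · rw [if_pos h, hmomμ (j - 1 - d) (by omega), mul_zero]
      · rw [if_neg h]
    rw [Finset.sum_congr rfl h1, Finset.sum_const_zero, zero_add,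
      if_pos (by omega : d < l)]
    have : l - 1 - d = κ := by omega
    have hml : m.coeff l = 1 := hmonic.coeff_natDegree
    rw [this, hml, one_mul]
  have hctop : ∀ k : ℕ, d < k → q.coeff k = 0 := by
    intro k hk
    rw [hcoeff k]
    refine Finset.sum_eq_zero fun j hj => ?_
    rw [Finset.mem_range] at hj
    by_cases h : k < j
    · rw [if_pos h, hmomμ (j - 1 - k) (by omega), mul_zero]
    · rw [if_neg h]
  have hqdle : q.degree ≤ (d : ℕ) := by
    rw [Polynomial.degree_le_iff_coeff_zero]
    intro k hk
    refine hctop k ?_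
    exact_mod_cast Nat.cast_lt.mp (by exact_mod_cast hk)
  have hqdeg : q.degree = (d : ℕ) :=
    Polynomial.degree_eq_of_le_of_coeff_ne_zero hqdle (by rw [hcd]; exact hκμ)
  constructor
  · rw [hpq, hqdeg]
  · rw [hpq, Polynomial.leadingCoeff, Polynomial.natDegree_eq_of_degree_eq_some hqdeg, hcd]
end

section
/- Assume that for some integer κ ≥ 0 one has v^*A^j u = 0 for j = 0, …, κ−1 and v^*A^κ u ≠ 0. Then for every τ ∈ ℂ, every eigenvalue λ of A + τuv^* with |λ| > ‖A‖ satisfies λ^{κ+1} = τ·Σ_{j=κ}^{∞} (v^*A^j u)·λ^{κ−j}, and consequently |λ^{κ+1} − τ·(v^*A^κ u)| ≤ |τ|·‖u‖·‖v‖·‖A‖^{κ+1}/(|λ| − ‖A‖). -/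
open Matrix Filter

/-- With `v^*Aʲu = 0` for `j < κ` and `v^*Aᵏu ≠ 0`: every eigenvalue `λ`
of `A + τuv^*` with `|λ| > ‖A‖` (Euclidean operator norm) satisfies
`λ^{κ+1} = τ·Σ_{m=0}^{∞} (v^*A^{κ+m}u)·λ^{−m}` (the series `Σ_{j=κ}^∞ (v^*Aʲu) λ^{κ−j}`),
and hence `|λ^{κ+1} − τ·(v^*Aᵏu)| ≤ |τ|·‖u‖·‖v‖·‖A‖^{κ+1}/(|λ| − ‖A‖)`. -/
theorem stmt15 (n : ℕ) (hn : 1 ≤ n) (A : Matrix (Fin n) (Fin n) ℂ) (u v : Fin n → ℂ)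
    (κ : ℕ)
    (hmom : ∀ j : ℕ, j < κ → star v ⬝ᵥ ((A ^ j) *ᵥ u) = 0)
    (hκ : star v ⬝ᵥ ((A ^ κ) *ᵥ u) ≠ 0)
    (τ lam : ℂ)
    (hlam : lam ∈ spectrum ℂ (A + τ • vecMulVec u (star v)))
    (hbig : ‖Matrix.toEuclideanCLM (𝕜 := ℂ) A‖ < ‖lam‖) :
    lam ^ (κ + 1) =
      τ * ∑' m : ℕ, (star v ⬝ᵥ ((A ^ (κ + m)) *ᵥ u)) * lam⁻¹ ^ m ∧
    ‖lam ^ (κ + 1) - τ * (star v ⬝ᵥ ((A ^ κ) *ᵥ u))‖ ≤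
      ‖τ‖ * ‖(show EuclideanSpace ℂ (Fin n) from WithLp.toLp 2 u)‖ *
        ‖(show EuclideanSpace ℂ (Fin n) from WithLp.toLp 2 v)‖ *
        ‖Matrix.toEuclideanCLM (𝕜 := ℂ) A‖ ^ (κ + 1) /
        (‖lam‖ - ‖Matrix.toEuclideanCLM (𝕜 := ℂ) A‖) := by
  classical
  set T := Matrix.toEuclideanCLM (𝕜 := ℂ) A with hT
  set a := ‖T‖ with ha
  set L := ‖lam‖ with hLdef
  have ha0 : 0 ≤ a := norm_nonneg _
  have hL0 : 0 < L := lt_of_le_of_lt ha0 hbig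
  have hlam0 : lam ≠ 0 := by
    intro h; rw [h] at hLdef; simp at hLdef; rw [hLdef] at hL0; exact lt_irrefl _ hL0
  set μ := lam⁻¹ with hμ
  have hμabs : ‖μ‖ = L⁻¹ := by rw [hμ, hLdef, norm_inv]
  -- euclidean coercion
  set e : (Fin n → ℂ) → EuclideanSpace ℂ (Fin n) := fun w => (WithLp.equiv 2 _).symm w with he
  have hmulVecE : ∀ (B : Matrix (Fin n) (Fin n) ℂ) (w : Fin n → ℂ),
      e (B *ᵥ w) = Matrix.toEuclideanCLM (𝕜 := ℂ) B (e w) := by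
    intro B w
    rw [he]
    simp [Matrix.toEuclideanCLM_toLp, Matrix.toLin'_apply]
  have hTpow : ∀ (j : ℕ) (z : EuclideanSpace ℂ (Fin n)), ‖(T ^ j) z‖ ≤ a ^ j * ‖z‖ := by
    intro j
    induction j with
    | zero => intro z; simp
    | succ j ih =>
      intro z
      have h1 : (T ^ (j + 1)) z = (T ^ j) (T z) := by
        rw [pow_succ]; rfl
      rw [h1, pow_succ]
      calc ‖(T ^ j) (T z)‖ ≤ a ^ j * ‖T z‖ := ih _
        _ ≤ a ^ j * (a * ‖z‖) := by
            exact mul_le_mul_of_nonneg_left (T.le_opNorm z) (pow_nonneg ha0 j)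
        _ = a ^ j * a * ‖z‖ := by ring
  have hnormAj : ∀ (j : ℕ) (w : Fin n → ℂ), ‖e ((A ^ j) *ᵥ w)‖ ≤ a ^ j * ‖e w‖ := by
    intro j w
    rw [hmulVecE, map_pow]
    exact hTpow j (e w)
  have hinner : ∀ y w : Fin n → ℂ, (inner ℂ (e y) (e w) : ℂ) = star y ⬝ᵥ w := by
    intro y w
    rw [he]
    simp [PiLp.inner_apply, dotProduct, RCLike.inner_apply, mul_comm]
  have hdot : ∀ (y w : Fin n → ℂ), ‖star y ⬝ᵥ w‖ ≤ ‖e y‖ * ‖e w‖ := by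
    intro y w
    rw [← hinner]
    exact norm_inner_le_norm _ _
  have hdotAj : ∀ (j : ℕ) (w : Fin n → ℂ),
      ‖star v ⬝ᵥ ((A ^ j) *ᵥ w)‖ ≤ ‖e v‖ * (a ^ j * ‖e w‖) := by
    intro j w
    calc ‖star v ⬝ᵥ ((A ^ j) *ᵥ w)‖ ≤ ‖e v‖ * ‖e ((A ^ j) *ᵥ w)‖ := hdot _ _
      _ ≤ ‖e v‖ * (a ^ j * ‖e w‖) :=
          mul_le_mul_of_nonneg_left (hnormAj j w) (norm_nonneg _)
  -- eigenvector
  have hspec : lam ∈ spectrum ℂ (Matrix.toLinAlgEquiv' (A + τ • vecMulVec u (star v))) := by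
    rwa [AlgEquiv.spectrum_eq]
  have hev : Module.End.HasEigenvalue (Matrix.toLinAlgEquiv' (A + τ • vecMulVec u (star v))) lam :=
    Module.End.hasEigenvalue_iff_mem_spectrum.mpr hspec
  obtain ⟨x, hx⟩ := hev.exists_hasEigenvector
  have hx0 : x ≠ 0 := hx.right
  have heig : (A + τ • vecMulVec u (star v)) *ᵥ x = lam • x := by
    have h := hx.apply_eq_smul
    rwa [Matrix.toLinAlgEquiv'_apply] at h
  have hvmv : ∀ w : Fin n → ℂ, vecMulVec u (star v) *ᵥ w = (star v ⬝ᵥ w) • u := by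
    intro w
    funext i
    simp only [mulVec, vecMulVec_apply, dotProduct, Pi.smul_apply, smul_eq_mul,
      Finset.sum_mul, Finset.mul_sum]
    apply Finset.sum_congr rfl
    intro j _
    ring
  set c := star v ⬝ᵥ x with hc
  have hcore : A *ᵥ x + (τ * c) • u = lam • x := by
    rw [add_mulVec, smul_mulVec, hvmv, ← hc, smul_smul] at heig
    exact heig
  -- norms of e x
  have hex0 : 0 < ‖e x‖ := by
    rw [norm_pos_iff]
    intro h
    apply hx0
    have : (WithLp.equiv 2 (Fin n → ℂ)) (e x) = (WithLp.equiv 2 (Fin n → ℂ)) 0 := by rw [h]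
    simpa [he] using this
  by_cases hτc : τ * c = 0
  · exfalso
    have hAx : A *ᵥ x = lam • x := by
      rw [hτc, zero_smul, add_zero] at hcore; exact hcore
    have h1 : ‖e (A *ᵥ x)‖ ≤ a * ‖e x‖ := by
      have := hnormAj 1 x
      rwa [pow_one, pow_one] at this
    have h2 : e (lam • x) = lam • e x := rfl
    rw [hAx, h2, norm_smul, ← hLdef] at h1
    have : L ≤ a := le_of_mul_le_mul_right h1 hex0
    exact absurd hbig (not_lt.mpr this)
  have hτ : τ ≠ 0 := fun h => hτc (by rw [h, zero_mul])
  have hc0 : c ≠ 0 := fun h => hτc (by rw [h, mul_zero])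
  -- rearranged core
  have hx_eq : x = μ • (A *ᵥ x) + ((τ * c) * μ) • u := by
    have h1 : μ • (lam • x) = x := by rw [smul_smul, hμ, inv_mul_cancel₀ hlam0, one_smul]
    conv_lhs => rw [← h1, ← hcore]
    module
  -- iterated identity
  have key : ∀ N : ℕ, x = μ ^ N • ((A ^ N) *ᵥ x)
      + ∑ j ∈ Finset.range N, ((τ * c) * μ ^ (j + 1)) • ((A ^ j) *ᵥ u) := by
    intro N
    induction N with
    | zero => simp
    | succ N ih =>
      have step : (A ^ N) *ᵥ x
          = μ • ((A ^ (N + 1)) *ᵥ x) + ((τ * c) * μ) • ((A ^ N) *ᵥ u) := by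
        conv_lhs => rw [hx_eq]
        rw [mulVec_add, mulVec_smul, mulVec_smul, mulVec_mulVec, ← pow_succ]
      calc x = μ ^ N • ((A ^ N) *ᵥ x)
            + ∑ j ∈ Finset.range N, ((τ * c) * μ ^ (j + 1)) • ((A ^ j) *ᵥ u) := ih
        _ = μ ^ N • (μ • ((A ^ (N + 1)) *ᵥ x) + ((τ * c) * μ) • ((A ^ N) *ᵥ u))
            + ∑ j ∈ Finset.range N, ((τ * c) * μ ^ (j + 1)) • ((A ^ j) *ᵥ u) := by rw [step]
        _ = μ ^ (N + 1) • ((A ^ (N + 1)) *ᵥ x)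
            + ∑ j ∈ Finset.range (N + 1), ((τ * c) * μ ^ (j + 1)) • ((A ^ j) *ᵥ u) := by
              rw [Finset.sum_range_succ]
              module
  -- dot with star v
  have hdsum : ∀ (s : Finset ℕ) (w : ℕ → Fin n → ℂ),
      star v ⬝ᵥ (∑ j ∈ s, w j) = ∑ j ∈ s, star v ⬝ᵥ w j := by
    intro s w
    simp only [dotProduct, Finset.sum_apply, Finset.mul_sum]
    exact Finset.sum_comm
  have keyc : ∀ N : ℕ, c = μ ^ N * (star v ⬝ᵥ ((A ^ N) *ᵥ x))
      + (τ * c) * ∑ j ∈ Finset.range N, μ ^ (j + 1) * (star v ⬝ᵥ ((A ^ j) *ᵥ u)) := by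
    intro N
    have h := congrArg (fun w => star v ⬝ᵥ w) (key N)
    simp only [dotProduct_add, dotProduct_smul, smul_eq_mul, hdsum] at h
    rw [Finset.mul_sum]
    refine h.trans ?_
    congr 1
    apply Finset.sum_congr rfl
    intro j _
    ring
  set f : ℕ → ℂ := fun j => μ ^ (j + 1) * (star v ⬝ᵥ ((A ^ j) *ᵥ u)) with hf
  set r : ℝ := a * L⁻¹ with hr
  have hr0 : 0 ≤ r := mul_nonneg ha0 (inv_nonneg.mpr hL0.le)
  have hr1 : r < 1 := by
    rw [hr, ← div_eq_mul_inv]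
    exact (div_lt_one hL0).mpr hbig
  have hfb : ∀ j, ‖f j‖ ≤ (‖e v‖ * ‖e u‖ * L⁻¹) * r ^ j := by
    intro j
    rw [hf]
    simp only [norm_mul, norm_pow, hμabs]
    calc L⁻¹ ^ (j + 1) * ‖star v ⬝ᵥ ((A ^ j) *ᵥ u)‖
        ≤ L⁻¹ ^ (j + 1) * (‖e v‖ * (a ^ j * ‖e u‖)) := by
          exact mul_le_mul_of_nonneg_left (hdotAj j u)
            (pow_nonneg (inv_nonneg.mpr hL0.le) _)
      _ = (‖e v‖ * ‖e u‖ * L⁻¹) * r ^ j := by rw [hr]; ring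
  have hsumf : Summable f :=
    Summable.of_norm_bounded ((summable_geometric_of_lt_one hr0 hr1).mul_left _) hfb
  have htail : Tendsto (fun N => μ ^ N * (star v ⬝ᵥ ((A ^ N) *ᵥ x))) atTop (nhds 0) := by
    apply squeeze_zero_norm (a := fun N => (‖e v‖ * ‖e x‖) * r ^ N)
    · intro N
      simp only [norm_mul, norm_pow, hμabs]
      calc L⁻¹ ^ N * ‖star v ⬝ᵥ ((A ^ N) *ᵥ x)‖
          ≤ L⁻¹ ^ N * (‖e v‖ * (a ^ N * ‖e x‖)) := by
            exact mul_le_mul_of_nonneg_left (hdotAj N x)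
              (pow_nonneg (inv_nonneg.mpr hL0.le) _)
        _ = (‖e v‖ * ‖e x‖) * r ^ N := by rw [hr]; ring
    · simpa using (tendsto_pow_atTop_nhds_zero_of_lt_one hr0 hr1).const_mul (‖e v‖ * ‖e x‖)
  have hpartial : Tendsto (fun N => ∑ j ∈ Finset.range N, f j) atTop (nhds (∑' j, f j)) :=
    hsumf.hasSum.tendsto_sum_nat
  have h3 : Tendsto (fun N => (τ * c) * ∑ j ∈ Finset.range N, f j) atTop (nhds c) := by
    have heq : (fun N => (τ * c) * ∑ j ∈ Finset.range N, f j)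
        = fun N => c - μ ^ N * (star v ⬝ᵥ ((A ^ N) *ᵥ x)) := by
      funext N
      have := keyc N
      rw [hf]
      linear_combination -this
    rw [heq]
    simpa using tendsto_const_nhds.sub htail
  have hts : (τ * c) * ∑' j, f j = c :=
    tendsto_nhds_unique (hpartial.const_mul (τ * c)) h3
  have hτF : τ * ∑' j, f j = 1 := by
    have h : (τ * ∑' j, f j) * c = 1 * c := by linear_combination hts
    exact mul_right_cancel₀ hc0 h
  -- shift the series
  set g : ℕ → ℂ := fun m => (star v ⬝ᵥ ((A ^ (κ + m)) *ᵥ u)) * μ ^ m with hg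
  have hshift : ∑' m, f (κ + m) = ∑' j, f j := by
    apply Function.Injective.tsum_eq (add_right_injective κ)
    intro j hj
    rcases le_or_gt κ j with h | h
    · exact ⟨j - κ, by show κ + (j - κ) = j; omega⟩
    · exact absurd (by rw [hf]; simp [hmom j h]) hj
  have hfg : ∀ m, f (κ + m) = μ ^ (κ + 1) * g m := by
    intro m
    rw [hf, hg]
    simp only []
    rw [show κ + m + 1 = (κ + 1) + m by ring, pow_add]
    ring
  have hμlam : lam ^ (κ + 1) * μ ^ (κ + 1) = 1 := by
    rw [hμ, ← mul_pow, mul_inv_cancel₀ hlam0, one_pow]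
  have hsum_shift : ∑' j, f j = μ ^ (κ + 1) * ∑' m, g m := by
    rw [← hshift]
    rw [show (fun m => f (κ + m)) = fun m => μ ^ (κ + 1) * g m from funext hfg]
    exact tsum_mul_left
  have part1 : lam ^ (κ + 1) = τ * ∑' m, g m := by
    have h : τ * (μ ^ (κ + 1) * ∑' m, g m) = 1 := by rw [← hsum_shift]; exact hτF
    linear_combination (-(lam ^ (κ + 1))) * h + (τ * ∑' m, g m) * hμlam +
      hμlam * (τ * ∑' m, g m) - (τ * ∑' m, g m) * hμlam
  have part1' : lam ^ (κ + 1) = τ * ∑' m : ℕ, (star v ⬝ᵥ ((A ^ (κ + m)) *ᵥ u)) * lam⁻¹ ^ m := by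
    rw [← hμ, ← hg]; exact part1
  refine ⟨part1', ?_⟩
  -- part 2
  have hsumg : Summable g := by
    have h1 : Summable (fun m => f (κ + m)) := hsumf.comp_injective (add_right_injective κ)
    have h2 := h1.mul_left (lam ^ (κ + 1))
    apply h2.congr
    intro m
    rw [hfg m]
    calc lam ^ (κ + 1) * (μ ^ (κ + 1) * g m) = (lam ^ (κ + 1) * μ ^ (κ + 1)) * g m := by ring
      _ = g m := by rw [hμlam, one_mul]
  have hsplit : ∑' m, g m = g 0 + ∑' m, g (m + 1) := hsumg.tsum_eq_zero_add
  have hg0 : g 0 = star v ⬝ᵥ ((A ^ κ) *ᵥ u) := by rw [hg]; simp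
  have hmain : lam ^ (κ + 1) - τ * (star v ⬝ᵥ ((A ^ κ) *ᵥ u)) = τ * ∑' m, g (m + 1) := by
    rw [← hg0]
    linear_combination part1 + τ * hsplit
  rw [hmain]
  -- bound
  have hg1b : ∀ m, ‖g (m + 1)‖ ≤ (‖e v‖ * ‖e u‖ * (a ^ (κ + 1) * L⁻¹)) * r ^ m := by
    intro m
    rw [hg]
    simp only [norm_mul, norm_pow, hμabs]
    calc ‖star v ⬝ᵥ ((A ^ (κ + (m + 1))) *ᵥ u)‖ * L⁻¹ ^ (m + 1)
        ≤ (‖e v‖ * (a ^ (κ + (m + 1)) * ‖e u‖)) * L⁻¹ ^ (m + 1) := by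
          exact mul_le_mul_of_nonneg_right (hdotAj _ u)
            (pow_nonneg (inv_nonneg.mpr hL0.le) _)
      _ = (‖e v‖ * ‖e u‖ * (a ^ (κ + 1) * L⁻¹)) * r ^ m := by
          rw [hr, show κ + (m + 1) = (κ + 1) + m by ring, pow_add, pow_add]
          ring
  have hgeo : Summable (fun m : ℕ => (‖e v‖ * ‖e u‖ * (a ^ (κ + 1) * L⁻¹)) * r ^ m) :=
    (summable_geometric_of_lt_one hr0 hr1).mul_left _
  have hsumg1n : Summable (fun m => ‖g (m + 1)‖) :=
    Summable.of_nonneg_of_le (fun m => norm_nonneg _) hg1b hgeo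
  have hb1 : ‖∑' m, g (m + 1)‖ ≤ ∑' m, ‖g (m + 1)‖ := norm_tsum_le_tsum_norm hsumg1n
  have hb2 : ∑' m, ‖g (m + 1)‖ ≤ (‖e v‖ * ‖e u‖ * (a ^ (κ + 1) * L⁻¹)) * (1 - r)⁻¹ := by
    calc ∑' m, ‖g (m + 1)‖
        ≤ ∑' m : ℕ, (‖e v‖ * ‖e u‖ * (a ^ (κ + 1) * L⁻¹)) * r ^ m :=
          Summable.tsum_le_tsum hg1b hsumg1n hgeo
      _ = (‖e v‖ * ‖e u‖ * (a ^ (κ + 1) * L⁻¹)) * ∑' m : ℕ, r ^ m := tsum_mul_left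
      _ = (‖e v‖ * ‖e u‖ * (a ^ (κ + 1) * L⁻¹)) * (1 - r)⁻¹ := by
          rw [tsum_geometric_of_lt_one hr0 hr1]
  have hLa : 0 < L - a := sub_pos.mpr hbig
  have harith : ‖τ‖ * ((‖e v‖ * ‖e u‖ * (a ^ (κ + 1) * L⁻¹)) * (1 - r)⁻¹)
      = ‖τ‖ * ‖e u‖ * ‖e v‖ * a ^ (κ + 1) / (L - a) := by
    rw [hr]
    have h1r : 1 - a * L⁻¹ = (L - a) * L⁻¹ := by field_simp
    rw [h1r, mul_inv, inv_inv]
    field_simp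
  have heu : (show EuclideanSpace ℂ (Fin n) from WithLp.toLp 2 u) = e u := rfl
  have hev' : (show EuclideanSpace ℂ (Fin n) from WithLp.toLp 2 v) = e v := rfl
  rw [heu, hev']
  calc ‖τ * ∑' m, g (m + 1)‖
      = ‖τ‖ * ‖∑' m, g (m + 1)‖ := by
        rw [norm_mul]
    _ ≤ ‖τ‖ * ((‖e v‖ * ‖e u‖ * (a ^ (κ + 1) * L⁻¹)) * (1 - r)⁻¹) := by
        exact mul_le_mul_of_nonneg_left (le_trans hb1 hb2) (norm_nonneg _)
    _ = ‖τ‖ * ‖e u‖ * ‖e v‖ * a ^ (κ + 1) / (L - a) := harith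
end

section
/- Let H ∈ ℂ^{n×n} be Hermitian and invertible, let A ∈ ℂ^{n×n} be H-selfadjoint, let u ∈ ℂ^n, and set Q(λ) = u^*H(λI_n − A)^{-1}u. Suppose there exist x ∈ ℝ with x ∉ σ(A) and τ_0 > 0 such that Q(x) = 1/τ_0, Q'(x) = 0 and Q''(x) ≠ 0. Then for every δ > 0 there exists ε > 0 such that: for every H-selfadjoint Ã ∈ ℂ^{n×n} and every ũ ∈ ℂ^n with ‖Ã − A‖ < ε and ‖ũ − u‖ < ε, there exist x̃ ∈ ℝ with x̃ ∉ σ(Ã) and |x̃ − x| < δ, and τ̃_0 > 0, such that Q̃(x̃) = 1/τ̃_0, Q̃'(x̃) = 0 and Q̃''(x̃) ≠ 0, where Q̃(λ) = ũ^*H(λI_n − Ã)^{-1}ũ. -/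
open Matrix

attribute [local instance] Matrix.normedAddCommGroup

namespace Stmt16Aux

open Polynomial Filter

variable {n : ℕ}

noncomputable def Bm (M : Matrix (Fin n) (Fin n) ℂ) (z : ℂ) : Matrix (Fin n) (Fin n) ℂ :=
  z • (1 : Matrix (Fin n) (Fin n) ℂ) - M

noncomputable def dd (M : Matrix (Fin n) (Fin n) ℂ) (z : ℂ) : ℂ := (Bm M z).det

noncomputable def Sm (M : Matrix (Fin n) (Fin n) ℂ) (z : ℂ) : Matrix (Fin n) (Fin n) ℂ :=
  (Bm M z)⁻¹

lemma charmatrix_eval (M : Matrix (Fin n) (Fin n) ℂ) (z : ℂ) :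
    (charmatrix M).map (evalRingHom z) = Bm M z := by
  ext i j
  by_cases h : i = j <;>
    simp [h, Bm, charmatrix_apply, Matrix.sub_apply, Matrix.smul_apply, Matrix.one_apply,
      Matrix.map_apply]

lemma dd_eval (M : Matrix (Fin n) (Fin n) ℂ) (z : ℂ) : dd M z = (M.charpoly).eval z := by
  rw [dd, Matrix.charpoly, ← charmatrix_eval M z, ← RingHom.mapMatrix_apply, ← RingHom.map_det]
  rfl

lemma adj_eval (M : Matrix (Fin n) (Fin n) ℂ) (z : ℂ) :
    adjugate (Bm M z) = (adjugate (charmatrix M)).map (evalRingHom z) := by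
  rw [← charmatrix_eval M z, ← RingHom.mapMatrix_apply, ← RingHom.map_adjugate,
    RingHom.mapMatrix_apply]

lemma diff_dd (M : Matrix (Fin n) (Fin n) ℂ) : Differentiable ℂ (dd M) := by
  have : dd M = fun z => (M.charpoly).eval z := by funext z; exact dd_eval M z
  rw [this]; exact Polynomial.differentiable _

lemma diff_adj (M : Matrix (Fin n) (Fin n) ℂ) (i j : Fin n) :
    Differentiable ℂ (fun z => adjugate (Bm M z) i j) := by
  have : (fun z => adjugate (Bm M z) i j) = fun z => (adjugate (charmatrix M) i j).eval z := by
    funext z; rw [adj_eval]; rfl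
  rw [this]; exact Polynomial.differentiable _

lemma Sm_eq (M : Matrix (Fin n) (Fin n) ℂ) (z : ℂ) :
    Sm M z = (dd M z)⁻¹ • adjugate (Bm M z) := by
  rw [Sm, Matrix.inv_def, Ring.inverse_eq_inv', dd]

lemma Bm_mul_Sm {M : Matrix (Fin n) (Fin n) ℂ} {z : ℂ} (h : dd M z ≠ 0) :
    Bm M z * Sm M z = 1 :=
  Matrix.mul_nonsing_inv _ (isUnit_iff_ne_zero.2 h)

lemma Sm_mul_Bm {M : Matrix (Fin n) (Fin n) ℂ} {z : ℂ} (h : dd M z ≠ 0) :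
    Sm M z * Bm M z = 1 :=
  Matrix.nonsing_inv_mul _ (isUnit_iff_ne_zero.2 h)

lemma hasDerivAt_Bm (M : Matrix (Fin n) (Fin n) ℂ) (z : ℂ) (i j : Fin n) :
    HasDerivAt (fun z => Bm M z i j) ((1 : Matrix (Fin n) (Fin n) ℂ) i j) z := by
  have : (fun z => Bm M z i j) = fun z => z * (1 : Matrix (Fin n) (Fin n) ℂ) i j - M i j := by
    funext w; simp [Bm, Matrix.sub_apply, Matrix.smul_apply, smul_eq_mul]
  rw [this]
  simpa using ((hasDerivAt_id z).mul_const ((1 : Matrix (Fin n) (Fin n) ℂ) i j)).sub_const (M i j)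

lemma hasDerivAt_matmul {f g : ℂ → Matrix (Fin n) (Fin n) ℂ} {f' g' : Matrix (Fin n) (Fin n) ℂ}
    {z : ℂ} (hf : ∀ i j, HasDerivAt (fun z => f z i j) (f' i j) z)
    (hg : ∀ i j, HasDerivAt (fun z => g z i j) (g' i j) z) (i j : Fin n) :
    HasDerivAt (fun z => (f z * g z) i j) ((f' * g z + f z * g') i j) z := by
  simp only [Matrix.mul_apply, Matrix.add_apply]
  rw [← Finset.sum_add_distrib]
  exact HasDerivAt.fun_sum fun k _ => (hf i k).mul (hg k j)

lemma hasDerivAt_form (H : Matrix (Fin n) (Fin n) ℂ) (v : Fin n → ℂ)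
    {f : ℂ → Matrix (Fin n) (Fin n) ℂ} {f' : Matrix (Fin n) (Fin n) ℂ} {z : ℂ}
    (hf : ∀ i j, HasDerivAt (fun z => f z i j) (f' i j) z) :
    HasDerivAt (fun z => star v ⬝ᵥ ((H * f z) *ᵥ v)) (star v ⬝ᵥ ((H * f') *ᵥ v)) z := by
  simp only [dotProduct, mulVec, Matrix.mul_apply]
  apply HasDerivAt.fun_sum
  intro i _
  apply HasDerivAt.const_mul
  apply HasDerivAt.fun_sum
  intro j _
  apply HasDerivAt.mul_const
  apply HasDerivAt.fun_sum
  intro k _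
  exact (hf k j).const_mul (H i k)

lemma isOpen_dd (M : Matrix (Fin n) (Fin n) ℂ) : IsOpen {w : ℂ | dd M w ≠ 0} :=
  isOpen_compl_iff.2 (isClosed_singleton.preimage (diff_dd M).continuous)

lemma diffAt_Sm {M : Matrix (Fin n) (Fin n) ℂ} {z : ℂ} (h : dd M z ≠ 0) (i j : Fin n) :
    DifferentiableAt ℂ (fun w => Sm M w i j) z := by
  have : (fun w => Sm M w i j) = fun w => (dd M w)⁻¹ * adjugate (Bm M w) i j := by
    funext w; rw [Sm_eq]; simp [Matrix.smul_apply, smul_eq_mul]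
  rw [this]
  exact (((diff_dd M) z).inv h).mul ((diff_adj M i j) z)

lemma hasDerivAt_Sm {M : Matrix (Fin n) (Fin n) ℂ} {z : ℂ} (h : dd M z ≠ 0) (i j : Fin n) :
    HasDerivAt (fun w => Sm M w i j) ((-(Sm M z * Sm M z)) i j) z := by
  set T : Matrix (Fin n) (Fin n) ℂ := Matrix.of fun i j => deriv (fun w => Sm M w i j) z with hTdef
  have hT : ∀ i j, HasDerivAt (fun w => Sm M w i j) (T i j) z := fun i j =>
    (diffAt_Sm h i j).hasDerivAt
  have hnb : ∀ᶠ w in nhds z, dd M w ≠ 0 := (isOpen_dd M).mem_nhds h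
  have key : (1 : Matrix (Fin n) (Fin n) ℂ) * Sm M z + Bm M z * T = 0 := by
    ext i j
    have f1 : HasDerivAt (fun w => (Bm M w * Sm M w) i j)
        (((1 : Matrix (Fin n) (Fin n) ℂ) * Sm M z + Bm M z * T) i j) z :=
      hasDerivAt_matmul (hasDerivAt_Bm M z) hT i j
    have f2 : HasDerivAt (fun w => (Bm M w * Sm M w) i j) 0 z := by
      have heq : (fun w => (Bm M w * Sm M w) i j) =ᶠ[nhds z]
          fun _ => (1 : Matrix (Fin n) (Fin n) ℂ) i j := by
        filter_upwards [hnb] with w hw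
        rw [Bm_mul_Sm hw]
      exact (hasDerivAt_const z _).congr_of_eventuallyEq heq
    have := f1.unique f2
    simpa using this
  have hBT : Bm M z * T = -(Sm M z) := by
    have := key
    rw [Matrix.one_mul] at this
    have h2 : Bm M z * T = -(Sm M z) + (Sm M z + Bm M z * T) := by abel
    rw [h2, this, add_zero]
  have hTeq : T = -(Sm M z * Sm M z) := by
    calc T = (Sm M z * Bm M z) * T := by rw [Sm_mul_Bm h, Matrix.one_mul]
    _ = Sm M z * (Bm M z * T) := by rw [Matrix.mul_assoc]
    _ = Sm M z * (-(Sm M z)) := by rw [hBT]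
    _ = -(Sm M z * Sm M z) := by rw [Matrix.mul_neg]
  rw [← hTeq]
  exact hT i j

/-! reflection -/

lemma star_form (N : Matrix (Fin n) (Fin n) ℂ) (v : Fin n → ℂ) :
    star (star v ⬝ᵥ (N *ᵥ v)) = star v ⬝ᵥ (Nᴴ *ᵥ v) := by
  simp only [dotProduct, mulVec, star_sum, star_mul', star_star, conjTranspose_apply,
    Finset.mul_sum, Finset.sum_mul]
  rw [Finset.sum_comm]
  exact Finset.sum_congr rfl fun i _ => Finset.sum_congr rfl fun j _ => by
    try simp only [Pi.star_apply, star_star]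
    ring

section refl
variable {H M : Matrix (Fin n) (Fin n) ℂ}
  (hH : H.IsHermitian) (hHinv : IsUnit H) (hM : H * M = Mᴴ * H)

include hH hM in
lemma Bm_conj (z : ℂ) : H * Bm M (star z) = (Bm M z)ᴴ * H := by
  simp only [Bm, conjTranspose_sub, conjTranspose_smul, conjTranspose_one, mul_sub, sub_mul,
    Matrix.mul_smul, Matrix.smul_mul, Matrix.mul_one, Matrix.one_mul, hM, hH.eq]

include hH hHinv hM in
lemma Sm_conj (z : ℂ) : H * Sm M (star z) = (Sm M z)ᴴ * H := by
  have hB : Bm M (star z) = H⁻¹ * ((Bm M z)ᴴ * H) := by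
    rw [← Bm_conj hH hM, ← Matrix.mul_assoc,
      Matrix.nonsing_inv_mul _ ((Matrix.isUnit_iff_isUnit_det H).1 hHinv), Matrix.one_mul]
  haveI := hHinv.invertible
  have hSm : Sm M (star z) = H⁻¹ * (Sm M z)ᴴ * H := by
    rw [Sm, Sm, hB, Matrix.mul_inv_rev, Matrix.mul_inv_rev, Matrix.inv_inv_of_invertible,
      Matrix.conjTranspose_nonsing_inv, Matrix.mul_assoc]
  rw [hSm, ← Matrix.mul_assoc, ← Matrix.mul_assoc,
    Matrix.mul_nonsing_inv _ ((Matrix.isUnit_iff_isUnit_det H).1 hHinv), Matrix.one_mul]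

include hH hHinv hM in
lemma Sm_pow_conj (z : ℂ) (k : ℕ) :
    H * (Sm M (star z)) ^ k = ((Sm M z) ^ k)ᴴ * H := by
  induction k with
  | zero => simp
  | succ k ih =>
    rw [pow_succ, pow_succ', conjTranspose_mul, ← Matrix.mul_assoc, ih, Matrix.mul_assoc,
      Sm_conj hH hHinv hM, Matrix.mul_assoc]

include hH hHinv hM in
lemma QQ_conj (v : Fin n → ℂ) (z : ℂ) (k : ℕ) :
    star (star v ⬝ᵥ ((H * (Sm M z) ^ k) *ᵥ v)) =
      star v ⬝ᵥ ((H * (Sm M (star z)) ^ k) *ᵥ v) := by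
  rw [star_form, conjTranspose_mul, hH.eq, ← Sm_pow_conj hH hHinv hM]

include hH hHinv hM in
lemma QQ_real (v : Fin n → ℂ) (t : ℝ) (k : ℕ) :
    ((star v ⬝ᵥ ((H * (Sm M (t : ℂ)) ^ k) *ᵥ v)).re : ℂ)
      = star v ⬝ᵥ ((H * (Sm M (t : ℂ)) ^ k) *ᵥ v) := by
  have := QQ_conj hH hHinv hM (M := M) v (t : ℂ) k
  rw [show star ((t : ℂ)) = (t : ℂ) from Complex.conj_ofReal t] at this
  exact Complex.conj_eq_iff_re.1 this
end refl

/-! joint continuity -/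

abbrev PSp (n : ℕ) := (Matrix (Fin n) (Fin n) ℂ × (Fin n → ℂ)) × ℝ

noncomputable def FF (H : Matrix (Fin n) (Fin n) ℂ) (k : ℕ) (p : PSp n) : ℂ :=
  star p.1.2 ⬝ᵥ ((H * (Sm p.1.1 (p.2 : ℂ)) ^ k) *ᵥ p.1.2)

lemma cont_Bm2 : Continuous fun p : PSp n => Bm p.1.1 (p.2 : ℂ) := by
  unfold Bm
  exact ((Complex.continuous_ofReal.comp continuous_snd).smul continuous_const).sub
    (continuous_fst.comp continuous_fst)

lemma cont_dd2 : Continuous fun p : PSp n => dd p.1.1 (p.2 : ℂ) :=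
  cont_Bm2.matrix_det

lemma isOpen_U : IsOpen {p : PSp n | dd p.1.1 (p.2 : ℂ) ≠ 0} :=
  isOpen_compl_iff.2 (isClosed_singleton.preimage cont_dd2)

lemma contOn_Sm2 : ContinuousOn (fun p : PSp n => Sm p.1.1 (p.2 : ℂ))
    {p : PSp n | dd p.1.1 (p.2 : ℂ) ≠ 0} := by
  rw [continuousOn_iff_continuous_restrict]
  have h1 : Continuous fun q : {p : PSp n | dd p.1.1 (p.2 : ℂ) ≠ 0} =>
      dd q.1.1.1 (q.1.2 : ℂ) := cont_dd2.comp continuous_subtype_val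
  have h2 : Continuous fun q : {p : PSp n | dd p.1.1 (p.2 : ℂ) ≠ 0} =>
      (dd q.1.1.1 (q.1.2 : ℂ))⁻¹ := h1.inv₀ fun q => q.2
  have h3 : Continuous fun q : {p : PSp n | dd p.1.1 (p.2 : ℂ) ≠ 0} =>
      adjugate (Bm q.1.1.1 (q.1.2 : ℂ)) := (cont_Bm2.comp continuous_subtype_val).matrix_adjugate
  have heq : (fun q : {p : PSp n | dd p.1.1 (p.2 : ℂ) ≠ 0} => Sm q.1.1.1 (q.1.2 : ℂ))
      = fun q => (dd q.1.1.1 (q.1.2 : ℂ))⁻¹ • adjugate (Bm q.1.1.1 (q.1.2 : ℂ)) := by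
    funext q; rw [Sm_eq]
  have hres : Continuous ({p : PSp n | dd p.1.1 (p.2 : ℂ) ≠ 0}.restrict
      fun p : PSp n => Sm p.1.1 (p.2 : ℂ)) := by
    show Continuous (fun q : {p : PSp n | dd p.1.1 (p.2 : ℂ) ≠ 0} => Sm q.1.1.1 (q.1.2 : ℂ))
    exact heq ▸ h2.smul h3
  exact hres

lemma contOn_FF (H : Matrix (Fin n) (Fin n) ℂ) (k : ℕ) :
    ContinuousOn (FF H k) {p : PSp n | dd p.1.1 (p.2 : ℂ) ≠ 0} := by
  rw [continuousOn_iff_continuous_restrict]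
  have hS : Continuous fun q : {p : PSp n | dd p.1.1 (p.2 : ℂ) ≠ 0} =>
      Sm q.1.1.1 (q.1.2 : ℂ) := continuousOn_iff_continuous_restrict.1 contOn_Sm2
  have hSk : Continuous fun q : {p : PSp n | dd p.1.1 (p.2 : ℂ) ≠ 0} =>
      (Sm q.1.1.1 (q.1.2 : ℂ)) ^ k := by
    induction k with
    | zero => simpa using continuous_const
    | succ k ih => simpa only [pow_succ] using ih.matrix_mul hS
  have hv : Continuous fun q : {p : PSp n | dd p.1.1 (p.2 : ℂ) ≠ 0} =>
      q.1.1.2 := (continuous_snd.comp continuous_fst).comp continuous_subtype_val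
  exact (hv.star.dotProduct ((continuous_const.matrix_mul hSk).matrix_mulVec hv))

/-! the G functions and their derivatives -/

section derivs
variable (H : Matrix (Fin n) (Fin n) ℂ) (v : Fin n → ℂ) (M : Matrix (Fin n) (Fin n) ℂ)

noncomputable def G0 (z : ℂ) : ℂ := star v ⬝ᵥ ((H * Sm M z) *ᵥ v)
noncomputable def G1 (z : ℂ) : ℂ := star v ⬝ᵥ ((H * (-(Sm M z * Sm M z))) *ᵥ v)
noncomputable def G2 (z : ℂ) : ℂ :=
  star v ⬝ᵥ ((H * ((2 : ℂ) • (Sm M z * Sm M z * Sm M z))) *ᵥ v)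

lemma hasDerivAt_G0 {z : ℂ} (h : dd M z ≠ 0) : HasDerivAt (G0 H v M) (G1 H v M z) z :=
  hasDerivAt_form H v (hasDerivAt_Sm h)

lemma hasDerivAt_G1 {z : ℂ} (h : dd M z ≠ 0) : HasDerivAt (G1 H v M) (G2 H v M z) z := by
  have hent : ∀ i j, HasDerivAt (fun w => (-(Sm M w * Sm M w)) i j)
      (((2 : ℂ) • (Sm M z * Sm M z * Sm M z)) i j) z := by
    intro i j
    have h1 : HasDerivAt (fun w => (Sm M w * Sm M w) i j)
        ((-(Sm M z * Sm M z) * Sm M z + Sm M z * -(Sm M z * Sm M z)) i j) z :=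
      hasDerivAt_matmul (hasDerivAt_Sm h) (hasDerivAt_Sm h) i j
    have h2 : (fun w => (-(Sm M w * Sm M w)) i j) = fun w => -((Sm M w * Sm M w) i j) := by
      funext w; simp [Matrix.neg_apply]
    rw [h2]
    have h3 := h1.neg
    have h4 : -((-(Sm M z * Sm M z) * Sm M z + Sm M z * -(Sm M z * Sm M z)) i j)
        = ((2 : ℂ) • (Sm M z * Sm M z * Sm M z)) i j := by
      have key : -(-(Sm M z * Sm M z) * Sm M z + Sm M z * -(Sm M z * Sm M z))
          = (2 : ℂ) • (Sm M z * Sm M z * Sm M z) := by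
        rw [Matrix.neg_mul, Matrix.mul_neg, Matrix.mul_assoc]
        rw [two_smul]
        abel
      rw [← key]; simp [Matrix.neg_apply]
    rw [← h4]
    exact h3
  exact hasDerivAt_form H v hent

lemma deriv_G0 {z : ℂ} (h : dd M z ≠ 0) : deriv (G0 H v M) z = G1 H v M z :=
  (hasDerivAt_G0 H v M h).deriv

lemma deriv_deriv_G0 {z : ℂ} (h : dd M z ≠ 0) :
    deriv (deriv (G0 H v M)) z = G2 H v M z := by
  have hev : deriv (G0 H v M) =ᶠ[nhds z] G1 H v M := by
    filter_upwards [(isOpen_dd M).mem_nhds h] with w hw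
    exact deriv_G0 H v M hw
  rw [hev.deriv_eq]
  exact (hasDerivAt_G1 H v M h).deriv

lemma G0_eq (z : ℂ) : G0 H v M z = star v ⬝ᵥ ((H * (Sm M z) ^ 1) *ᵥ v) := by rw [pow_one]; rfl

lemma G1_eq (z : ℂ) : G1 H v M z = -(star v ⬝ᵥ ((H * (Sm M z) ^ 2) *ᵥ v)) := by
  rw [G1, sq, Matrix.mul_neg, Matrix.neg_mulVec, dotProduct_neg]

lemma G2_eq (z : ℂ) : G2 H v M z = 2 * (star v ⬝ᵥ ((H * (Sm M z) ^ 3) *ᵥ v)) := by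
  rw [G2, pow_succ, sq, Matrix.mul_smul, Matrix.smul_mulVec, dotProduct_smul, smul_eq_mul]

end derivs

section real
variable (v : Fin n → ℂ) {H M : Matrix (Fin n) (Fin n) ℂ}
  (hH : H.IsHermitian) (hHinv : IsUnit H) (hM : H * M = Mᴴ * H) {t : ℝ}
include hH hHinv hM

lemma G0_real : ((G0 H v M (t : ℂ)).re : ℂ) = G0 H v M (t : ℂ) := by
  rw [G0_eq]
  exact QQ_real hH hHinv hM v t 1

lemma G1_real : ((G1 H v M (t : ℂ)).re : ℂ) = G1 H v M (t : ℂ) := by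
  rw [G1_eq]
  have := QQ_real hH hHinv hM v t 2
  rw [← this]
  simp

lemma G2_real : ((G2 H v M (t : ℂ)).re : ℂ) = G2 H v M (t : ℂ) := by
  rw [G2_eq]
  have := QQ_real hH hHinv hM v t 3
  rw [← this]
  simp
end real

lemma not_spectrum_iff (M : Matrix (Fin n) (Fin n) ℂ) (z : ℂ) :
    z ∉ spectrum ℂ M ↔ dd M z ≠ 0 := by
  rw [spectrum.mem_iff, not_not, Algebra.algebraMap_eq_smul_one]
  rw [show z • (1 : Matrix (Fin n) (Fin n) ℂ) - M = Bm M z from rfl]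
  rw [Matrix.isUnit_iff_isUnit_det, isUnit_iff_ne_zero]
  exact ⟨fun h => h, fun h => h⟩

lemma hasDerivAt_re_ofReal {f : ℂ → ℂ} {f' : ℂ} {t : ℝ} (hf : HasDerivAt f f' (t : ℂ)) :
    HasDerivAt (fun s : ℝ => (f (s : ℂ)).re) f'.re t := by
  have := Complex.reCLM.hasFDerivAt.comp_hasDerivAt t hf.comp_ofReal
  exact this

lemma sign_helper {c σ r : ℝ} (h1 : 0 < σ * c) (hc2 : 0 < c * c) (h2 : 0 < c * r) :
    0 < σ * r := by nlinarith [mul_pos h1 h2]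

lemma FF1_G0 (H M : Matrix (Fin n) (Fin n) ℂ) (v : Fin n → ℂ) (t : ℝ) :
    FF H 1 ((M, v), t) = G0 H v M (t : ℂ) := (G0_eq H v M _).symm

lemma FF2_G1 (H M : Matrix (Fin n) (Fin n) ℂ) (v : Fin n → ℂ) (t : ℝ) :
    G1 H v M (t : ℂ) = -(FF H 2 ((M, v), t)) := G1_eq H v M _

lemma FF3_G2 (H M : Matrix (Fin n) (Fin n) ℂ) (v : Fin n → ℂ) (t : ℝ) :
    G2 H v M (t : ℂ) = 2 * FF H 3 ((M, v), t) := G2_eq H v M _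

end Stmt16Aux

open Stmt16Aux

/-- Stability, within the class of `H`-selfadjoint matrices, of a
double-eigenvalue obstruction at a real point: if `Q(x) = 1/τ₀`, `Q'(x) = 0`, `Q''(x) ≠ 0`
for some real `x ∉ σ(A)` and `τ₀ > 0`, where `Q(λ) = u^*H(λI − A)⁻¹u`, then the same holds
(with `x̃` near `x`) for every `H`-selfadjoint `Ã` near `A` and every `ũ` near `u`. -/
theorem stmt16 (n : ℕ) (hn : 1 ≤ n) (H : Matrix (Fin n) (Fin n) ℂ)
    (hH : H.IsHermitian) (hHinv : IsUnit H)
    (A : Matrix (Fin n) (Fin n) ℂ) (hA : H * A = Aᴴ * H) (u : Fin n → ℂ)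
    (Q : ℂ → ℂ)
    (hQ : Q = fun z : ℂ =>
      star u ⬝ᵥ ((H * (z • (1 : Matrix (Fin n) (Fin n) ℂ) - A)⁻¹) *ᵥ u))
    (x : ℝ) (hx : (x : ℂ) ∉ spectrum ℂ A) (τ0 : ℝ) (hτ0 : 0 < τ0)
    (h1 : Q (x : ℂ) = 1 / (τ0 : ℂ)) (h2 : deriv Q (x : ℂ) = 0)
    (h3 : deriv (deriv Q) (x : ℂ) ≠ 0) :
    ∀ δ : ℝ, 0 < δ → ∃ ε : ℝ, 0 < ε ∧
      ∀ (A' : Matrix (Fin n) (Fin n) ℂ) (u' : Fin n → ℂ),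
        H * A' = A'ᴴ * H →
        ‖A' - A‖ < ε →
        ‖(show EuclideanSpace ℂ (Fin n) from WithLp.toLp 2 (u' - u))‖ < ε →
        ∃ x' : ℝ, (x' : ℂ) ∉ spectrum ℂ A' ∧ |x' - x| < δ ∧
          ∃ τ0' : ℝ, 0 < τ0' ∧
            (fun z : ℂ =>
              star u' ⬝ᵥ ((H * (z • (1 : Matrix (Fin n) (Fin n) ℂ) - A')⁻¹) *ᵥ u')) (x' : ℂ)
              = 1 / (τ0' : ℂ) ∧
            deriv (fun z : ℂ =>
              star u' ⬝ᵥ ((H * (z • (1 : Matrix (Fin n) (Fin n) ℂ) - A')⁻¹) *ᵥ u'))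
              (x' : ℂ) = 0 ∧
            deriv (deriv (fun z : ℂ =>
              star u' ⬝ᵥ ((H * (z • (1 : Matrix (Fin n) (Fin n) ℂ) - A')⁻¹) *ᵥ u')))
              (x' : ℂ) ≠ 0 := by
  intro δ hδ
  subst hQ
  have hQG : (fun z : ℂ =>
      star u ⬝ᵥ ((H * (z • (1 : Matrix (Fin n) (Fin n) ℂ) - A)⁻¹) *ᵥ u)) = G0 H u A := rfl
  rw [hQG] at h1 h2 h3
  -- basic facts at x
  have hxd : dd A (x : ℂ) ≠ 0 := (not_spectrum_iff A _).1 hx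
  have hG1x : G1 H u A (x : ℂ) = 0 := by rw [← deriv_G0 H u A hxd]; exact h2
  have hG2x : G2 H u A (x : ℂ) ≠ 0 := by rw [← deriv_deriv_G0 H u A hxd]; exact h3
  set c : ℝ := (G2 H u A (x : ℂ)).re with hc_def
  have hcre : ((c : ℝ) : ℂ) = G2 H u A (x : ℂ) := G2_real u hH hHinv hA
  have hc : c ≠ 0 := by
    intro h0
    apply hG2x
    rw [← hcre, h0, Complex.ofReal_zero]
  have hc2 : 0 < c * c := mul_self_pos.mpr hc
  set σ : ℝ := if 0 < c then 1 else -1 with hσ_def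
  have hσc : 0 < σ * c := by
    by_cases h0 : 0 < c
    · simp only [hσ_def, if_pos h0, one_mul]; exact h0
    · have hlt : c < 0 := lt_of_le_of_ne (not_lt.1 h0) hc
      simp only [hσ_def, if_neg h0]
      nlinarith
  have hσ0 : σ ≠ 0 := by
    rcases ne_of_gt hσc with _
    intro h0
    rw [h0, zero_mul] at hσc
    exact lt_irrefl 0 hσc
  have hre0 : (G0 H u A (x : ℂ)).re = 1 / τ0 := by
    have hcast : (1 / (τ0 : ℂ)) = (((1 / τ0 : ℝ)) : ℂ) := by push_cast; ring
    rw [h1, hcast, Complex.ofReal_re]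
  -- continuity in t for the unperturbed data
  have he : Continuous (fun t : ℝ => (((A, u), t) : PSp n)) :=
    continuous_const.prodMk continuous_id
  set O1 : Set ℝ := {t : ℝ | dd A (t : ℂ) ≠ 0} with hO1_def
  have hO1 : IsOpen O1 := by
    have : O1 = (fun t : ℝ => (t : ℂ)) ⁻¹' {w : ℂ | dd A w ≠ 0} := rfl
    rw [this]
    exact (isOpen_dd A).preimage Complex.continuous_ofReal
  have hmapsTo : ∀ t ∈ O1, (((A, u), t) : PSp n) ∈ {p : PSp n | dd p.1.1 (p.2 : ℂ) ≠ 0} :=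
    fun t ht => ht
  have hcFF : ∀ k, ContinuousOn (fun t : ℝ => FF H k (((A, u), t) : PSp n)) O1 := fun k =>
    (contOn_FF H k).comp he.continuousOn hmapsTo
  have hc0 : ContinuousOn (fun t : ℝ => (G0 H u A (t : ℂ)).re) O1 := by
    have := Complex.continuous_re.comp_continuousOn (hcFF 1)
    exact this.congr fun t _ => by
      simp only [Function.comp_apply]
      rw [← FF1_G0]
  have h2re : ∀ w : ℂ, ((2 : ℂ) * w).re = 2 * w.re := fun w => by simp [Complex.mul_re]
  have hc2' : ContinuousOn (fun t : ℝ => c * (G2 H u A (t : ℂ)).re) O1 := by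
    refine continuousOn_const.mul ?_
    have hb : ContinuousOn (fun t : ℝ => 2 * (FF H 3 (((A, u), t) : PSp n)).re) O1 :=
      continuousOn_const.mul (Complex.continuous_re.comp_continuousOn (hcFF 3))
    exact hb.congr fun t _ => by rw [FF3_G2 H A u t, h2re]
  -- the open set Ω around x
  set Ω : Set ℝ := (O1 ∩ (fun t : ℝ => (G0 H u A (t : ℂ)).re) ⁻¹' Set.Ioi 0) ∩
      (O1 ∩ (fun t : ℝ => c * (G2 H u A (t : ℂ)).re) ⁻¹' Set.Ioi 0) with hΩ_def
  have hΩopen : IsOpen Ω :=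
    (hc0.isOpen_inter_preimage hO1 isOpen_Ioi).inter
      (hc2'.isOpen_inter_preimage hO1 isOpen_Ioi)
  have hxΩ : x ∈ Ω := by
    refine ⟨⟨hxd, ?_⟩, hxd, ?_⟩
    · show (0 : ℝ) < (G0 H u A (x : ℂ)).re
      rw [hre0]; positivity
    · show (0 : ℝ) < c * (G2 H u A (x : ℂ)).re
      rw [← hc_def]; exact hc2
  obtain ⟨r, hr, hball⟩ := Metric.isOpen_iff.1 hΩopen x hxΩ
  set η : ℝ := min (r / 2) (δ / 2) with hη_def
  have hη : 0 < η := lt_min (by linarith) (by linarith)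
  have hηδ : η < δ := lt_of_le_of_lt (min_le_right _ _) (by linarith)
  set J : Set ℝ := Set.Icc (x - η) (x + η) with hJ_def
  have hJΩ : J ⊆ Ω := by
    intro t ht
    apply hball
    rw [Metric.mem_ball, Real.dist_eq]
    have habs : |t - x| ≤ η := abs_le.2 ⟨by linarith [ht.1], by linarith [ht.2]⟩
    have hηr : η ≤ r / 2 := min_le_left _ _
    linarith
  have hJd : ∀ t ∈ J, dd A (t : ℂ) ≠ 0 := fun t ht => (hJΩ ht).1.1
  have hJ2 : ∀ t ∈ J, 0 < c * (G2 H u A (t : ℂ)).re := fun t ht => (hJΩ ht).2.2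
  -- monotone function ψ
  set ψ : ℝ → ℝ := fun t => σ * (G1 H u A (t : ℂ)).re with hψ_def
  have hψderiv : ∀ t ∈ J, HasDerivAt ψ (σ * (G2 H u A (t : ℂ)).re) t := fun t ht =>
    (hasDerivAt_re_ofReal (hasDerivAt_G1 H u A (hJd t ht))).const_mul σ
  have hψmono : StrictMonoOn ψ J := by
    apply strictMonoOn_of_deriv_pos (convex_Icc _ _)
    · exact fun t ht => ((hψderiv t ht).continuousAt).continuousWithinAt
    · intro t ht
      rw [interior_Icc] at ht
      have htJ : t ∈ J := Set.Ioo_subset_Icc_self ht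
      rw [(hψderiv t htJ).deriv]
      exact sign_helper hσc hc2 (hJ2 t htJ)
  have hψx : ψ x = 0 := by rw [hψ_def]; simp [hG1x]
  have hxJ : x ∈ J := ⟨by linarith, by linarith⟩
  have hxpJ : x + η ∈ J := ⟨by linarith, le_refl _⟩
  have hxmJ : x - η ∈ J := ⟨le_refl _, by linarith⟩
  have hplus : 0 < ψ (x + η) := by
    rw [← hψx]; exact hψmono hxJ hxpJ (by linarith)
  have hminus : ψ (x - η) < 0 := by
    rw [← hψx]; exact hψmono hxmJ hxJ (by linarith)
  -- the tube
  set U : Set (PSp n) := {p : PSp n | dd p.1.1 (p.2 : ℂ) ≠ 0} with hU_def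
  set f1 : PSp n → ℝ := fun q => (FF H 1 q).re with hf1_def
  set g2 : PSp n → ℝ := fun q => c * (2 * FF H 3 q).re with hg2_def
  have hcf1 : ContinuousOn f1 U := Complex.continuous_re.comp_continuousOn (contOn_FF H 1)
  have hcg2 : ContinuousOn g2 U := by
    apply ContinuousOn.mul continuousOn_const
    exact Complex.continuous_re.comp_continuousOn ((contOn_FF H 3).const_smul (2 : ℂ))
  set N : Set (PSp n) := (U ∩ f1 ⁻¹' Set.Ioi 0) ∩ (U ∩ g2 ⁻¹' Set.Ioi 0) with hN_def
  have hNopen : IsOpen N :=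
    (hcf1.isOpen_inter_preimage isOpen_U isOpen_Ioi).inter
      (hcg2.isOpen_inter_preimage isOpen_U isOpen_Ioi)
  have hsub : ({((A, u))} : Set (Matrix (Fin n) (Fin n) ℂ × (Fin n → ℂ))) ×ˢ J ⊆ N := by
    rintro ⟨p, t⟩ ⟨hp, ht⟩
    rw [Set.mem_singleton_iff] at hp
    subst hp
    have h0 : (0 : ℝ) < (G0 H u A (t : ℂ)).re := (hJΩ ht).1.2
    refine ⟨⟨hJd t ht, ?_⟩, hJd t ht, ?_⟩
    · show 0 < f1 ((A, u), t)
      rw [hf1_def]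
      show (0 : ℝ) < (FF H 1 ((A, u), t)).re
      rw [FF1_G0]
      exact h0
    · show 0 < g2 ((A, u), t)
      rw [hg2_def]
      show (0 : ℝ) < c * ((2 : ℂ) * FF H 3 ((A, u), t)).re
      rw [← FF3_G2]
      exact hJ2 t ht
  obtain ⟨V, W', hVopen, hW'open, hsV, hJW', hVW'⟩ :=
    generalized_tube_lemma isCompact_singleton isCompact_Icc hNopen hsub
  -- endpoint sets
  have hι : ∀ s : ℝ, Continuous
      (fun p : Matrix (Fin n) (Fin n) ℂ × (Fin n → ℂ) => ((p, s) : PSp n)) :=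
    fun s => continuous_id.prodMk continuous_const
  set Up : Set (Matrix (Fin n) (Fin n) ℂ × (Fin n → ℂ)) :=
    {p | dd p.1 ((x + η : ℝ) : ℂ) ≠ 0} with hUp_def
  set Um : Set (Matrix (Fin n) (Fin n) ℂ × (Fin n → ℂ)) :=
    {p | dd p.1 ((x - η : ℝ) : ℂ) ≠ 0} with hUm_def
  have hUpopen : IsOpen Up := isOpen_U.preimage (hι (x + η))
  have hUmopen : IsOpen Um := isOpen_U.preimage (hι (x - η))
  set fp : Matrix (Fin n) (Fin n) ℂ × (Fin n → ℂ) → ℝ :=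
    fun p => σ * (FF H 2 (p, x + η)).re with hfp_def
  set fm : Matrix (Fin n) (Fin n) ℂ × (Fin n → ℂ) → ℝ :=
    fun p => σ * (FF H 2 (p, x - η)).re with hfm_def
  have hcfp : ContinuousOn fp Up := by
    apply ContinuousOn.mul continuousOn_const
    exact Complex.continuous_re.comp_continuousOn
      ((contOn_FF H 2).comp (hι (x + η)).continuousOn (fun p hp => hp))
  have hcfm : ContinuousOn fm Um := by
    apply ContinuousOn.mul continuousOn_const
    exact Complex.continuous_re.comp_continuousOn
      ((contOn_FF H 2).comp (hι (x - η)).continuousOn (fun p hp => hp))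
  set Ep : Set (Matrix (Fin n) (Fin n) ℂ × (Fin n → ℂ)) := Up ∩ fp ⁻¹' Set.Iio 0 with hEp_def
  set Em : Set (Matrix (Fin n) (Fin n) ℂ × (Fin n → ℂ)) := Um ∩ fm ⁻¹' Set.Ioi 0 with hEm_def
  have hEpopen : IsOpen Ep := hcfp.isOpen_inter_preimage hUpopen isOpen_Iio
  have hEmopen : IsOpen Em := hcfm.isOpen_inter_preimage hUmopen isOpen_Ioi
  -- ψ t = -σ * (FF H 2 ((A,u), t)).re
  have hψFF : ∀ (M : Matrix (Fin n) (Fin n) ℂ) (v : Fin n → ℂ) (t : ℝ),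
      σ * (G1 H v M (t : ℂ)).re = -(σ * (FF H 2 ((M, v), t)).re) := by
    intro M v t
    rw [FF2_G1, Complex.neg_re]
    ring
  have hAuEp : (A, u) ∈ Ep := by
    refine ⟨hJd _ hxpJ, ?_⟩
    show σ * (FF H 2 ((A, u), x + η)).re < 0
    have hthis : 0 < σ * (G1 H u A ((x + η : ℝ) : ℂ)).re := hplus
    rw [hψFF A u (x + η)] at hthis
    linarith
  have hAuEm : (A, u) ∈ Em := by
    refine ⟨hJd _ hxmJ, ?_⟩
    show 0 < σ * (FF H 2 ((A, u), x - η)).re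
    have hthis : σ * (G1 H u A ((x - η : ℝ) : ℂ)).re < 0 := hminus
    rw [hψFF A u (x - η)] at hthis
    linarith
  -- final neighborhood and ε
  have hVAu : (A, u) ∈ V := hsV rfl
  have hmem : V ∩ Ep ∩ Em ∈ nhds ((A, u) : Matrix (Fin n) (Fin n) ℂ × (Fin n → ℂ)) :=
    ((hVopen.inter hEpopen).inter hEmopen).mem_nhds ⟨⟨hVAu, hAuEp⟩, hAuEm⟩
  obtain ⟨V1, hV1, V2, hV2, hV12⟩ := mem_nhds_prod_iff.1 hmem
  obtain ⟨ε1, hε1, hball1⟩ := Metric.mem_nhds_iff.1 hV1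
  obtain ⟨ε2, hε2, hball2⟩ := Metric.mem_nhds_iff.1 hV2
  refine ⟨min ε1 ε2, lt_min hε1 hε2, ?_⟩
  intro A' u' hA' hnA hnu
  -- membership
  have hA'V1 : A' ∈ V1 := by
    apply hball1
    rw [Metric.mem_ball, dist_eq_norm]
    exact lt_of_lt_of_le hnA (min_le_left _ _)
  have hu'V2 : u' ∈ V2 := by
    apply hball2
    rw [Metric.mem_ball]
    rw [dist_pi_lt_iff hε2]
    intro i
    rw [Complex.dist_eq]
    calc ‖u' i - u i‖ ≤ ‖(show EuclideanSpace ℂ (Fin n) from WithLp.toLp 2 (u' - u))‖ := by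
          rw [EuclideanSpace.norm_eq]
          have hh : ‖u' i - u i‖ = Real.sqrt (‖u' i - u i‖ ^ 2) := by
            rw [Real.sqrt_sq (norm_nonneg _)]
          rw [hh]
          apply Real.sqrt_le_sqrt
          exact Finset.single_le_sum (f := fun j => ‖u' j - u j‖ ^ 2)
            (fun j _ => sq_nonneg _) (Finset.mem_univ i)
      _ < min ε1 ε2 := hnu
      _ ≤ ε2 := min_le_right _ _
  have hp' : ((A', u') : Matrix (Fin n) (Fin n) ℂ × (Fin n → ℂ)) ∈ V ∩ Ep ∩ Em :=
    hV12 ⟨hA'V1, hu'V2⟩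
  -- consequences on J
  have hN' : ∀ t ∈ J, (((A', u'), t) : PSp n) ∈ N := fun t ht =>
    hVW' ⟨hp'.1.1, hJW' ht⟩
  have hd' : ∀ t ∈ J, dd A' (t : ℂ) ≠ 0 := fun t ht => (hN' t ht).1.1
  have h0' : ∀ t ∈ J, 0 < (G0 H u' A' (t : ℂ)).re := by
    intro t ht
    have := (hN' t ht).1.2
    rw [Set.mem_preimage, Set.mem_Ioi, hf1_def] at this
    show (0 : ℝ) < (G0 H u' A' (t : ℂ)).re
    rw [← FF1_G0]
    exact this
  have h2' : ∀ t ∈ J, 0 < c * (G2 H u' A' (t : ℂ)).re := by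
    intro t ht
    have := (hN' t ht).2.2
    rw [Set.mem_preimage, Set.mem_Ioi, hg2_def] at this
    show (0 : ℝ) < c * (G2 H u' A' (t : ℂ)).re
    rw [FF3_G2]
    exact this
  -- IVT for ψ'
  set ψ' : ℝ → ℝ := fun t => σ * (G1 H u' A' (t : ℂ)).re with hψ'_def
  have hψ'cont : ContinuousOn ψ' J := by
    have hmaps : ∀ t ∈ J, (((A', u'), t) : PSp n) ∈ U := fun t ht => hd' t ht
    have hbase : ContinuousOn (fun t : ℝ => FF H 2 (((A', u'), t) : PSp n)) J :=
      (contOn_FF H 2).comp (continuous_const.prodMk continuous_id).continuousOn hmaps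
    have hneg := ((Complex.continuous_re.comp_continuousOn hbase).const_smul σ).neg
    refine hneg.congr fun t _ => ?_
    show ψ' t = -(σ • (FF H 2 ((A', u'), t)).re)
    simp only [smul_eq_mul]
    exact hψFF A' u' t
  have hψ'p : 0 < ψ' (x + η) := by
    have hval : σ * (FF H 2 ((A', u'), x + η)).re < 0 := hp'.1.2.2
    show 0 < σ * (G1 H u' A' ((x + η : ℝ) : ℂ)).re
    rw [hψFF A' u' (x + η)]
    linarith
  have hψ'm : ψ' (x - η) < 0 := by
    have hval : 0 < σ * (FF H 2 ((A', u'), x - η)).re := hp'.2.2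
    show σ * (G1 H u' A' ((x - η : ℝ) : ℂ)).re < 0
    rw [hψFF A' u' (x - η)]
    linarith
  have hle : x - η ≤ x + η := by linarith
  have hIVT := intermediate_value_Icc hle hψ'cont
  have h0mem : (0 : ℝ) ∈ Set.Icc (ψ' (x - η)) (ψ' (x + η)) := ⟨le_of_lt hψ'm, le_of_lt hψ'p⟩
  obtain ⟨x', hx'J, hx'0⟩ := hIVT h0mem
  -- conclude
  have hdx' : dd A' ((x' : ℝ) : ℂ) ≠ 0 := hd' x' hx'J
  have hG1re : (G1 H u' A' ((x' : ℝ) : ℂ)).re = 0 := by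
    have : σ * (G1 H u' A' ((x' : ℝ) : ℂ)).re = 0 := hx'0
    exact (mul_eq_zero.1 this).resolve_left hσ0
  have hG1x' : G1 H u' A' ((x' : ℝ) : ℂ) = 0 := by
    rw [← G1_real u' hH hHinv hA', hG1re, Complex.ofReal_zero]
  have hG2x' : G2 H u' A' ((x' : ℝ) : ℂ) ≠ 0 := by
    intro h0
    have := h2' x' hx'J
    rw [h0] at this
    simp at this
  have hlam : (fun z : ℂ =>
      star u' ⬝ᵥ ((H * (z • (1 : Matrix (Fin n) (Fin n) ℂ) - A')⁻¹) *ᵥ u')) = G0 H u' A' := rfl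
  refine ⟨x', (not_spectrum_iff A' _).2 hdx', ?_, ?_⟩
  · have h1' := hx'J.1
    have h2'' := hx'J.2
    rw [abs_lt]
    constructor <;> [linarith; linarith]
  · set ρ : ℝ := (G0 H u' A' ((x' : ℝ) : ℂ)).re with hρ_def
    have hρpos : 0 < ρ := h0' x' hx'J
    refine ⟨ρ⁻¹, by positivity, ?_, ?_, ?_⟩
    · rw [hlam]
      rw [← G0_real u' hH hHinv hA' (t := x')]
      rw [← hρ_def]
      rw [show ((ρ⁻¹ : ℝ) : ℂ) = ((ρ : ℂ))⁻¹ by push_cast; ring]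
      rw [one_div, inv_inv]
    · rw [hlam, deriv_G0 H u' A' hdx', hG1x']
    · rw [hlam, deriv_deriv_G0 H u' A' hdx']
      exact hG2x'
end

section
/- Let J ∈ ℝ^{n×n} be invertible with J^⊤ = −J, let A ∈ ℝ^{n×n} be J-Hamiltonian, let u ∈ ℝ^n, and set Q(λ) = u^⊤J(λI_n − A)^{-1}u. Suppose there exist x ∈ ℝ with x ∉ σ(A) and τ_0 > 0 such that Q(x) = 1/τ_0, Q'(x) = 0 and Q''(x) ≠ 0. Then for every δ > 0 there exists ε > 0 such that: for every J-Hamiltonian Ã ∈ ℝ^{n×n} and every ũ ∈ ℝ^n with ‖Ã − A‖ < ε and ‖ũ − u‖ < ε, there exist x̃ ∈ ℝ with x̃ ∉ σ(Ã) and |x̃ − x| < δ, and τ̃_0 > 0, such that Q̃(x̃) = 1/τ̃_0, Q̃'(x̃) = 0 and Q̃''(x̃) ≠ 0, where Q̃(λ) = ũ^⊤J(λI_n − Ã)^{-1}ũ. -/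
open Matrix Filter Set

attribute [local instance] Matrix.normedAddCommGroup


variable {n : ℕ}

local notation "Mat" => Matrix (Fin n) (Fin n) ℝ
local notation "Vec" => Fin n → ℝ

/-- the quadratic form `v ↦ v ⬝ᵥ ((J * X) *ᵥ v)` -/
def dd (J X : Matrix (Fin n) (Fin n) ℝ) (v : Fin n → ℝ) : ℝ := v ⬝ᵥ ((J * X) *ᵥ v)

noncomputable def ff0 (J B : Matrix (Fin n) (Fin n) ℝ) (v : Fin n → ℝ) : ℝ → ℝ :=
  fun y => v ⬝ᵥ ((J * (y • (1 : Matrix (Fin n) (Fin n) ℝ) - B)⁻¹) *ᵥ v)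

noncomputable def Rm (B : Matrix (Fin n) (Fin n) ℝ) (y : ℝ) : Matrix (Fin n) (Fin n) ℝ :=
  (y • (1 : Matrix (Fin n) (Fin n) ℝ) - B)⁻¹

noncomputable def ff1 (J B : Matrix (Fin n) (Fin n) ℝ) (v : Fin n → ℝ) : ℝ → ℝ :=
  fun y => -(dd J (Rm B y * Rm B y) v)

noncomputable def ff2 (J B : Matrix (Fin n) (Fin n) ℝ) (v : Fin n → ℝ) : ℝ → ℝ :=
  fun y => 2 * dd J (Rm B y * Rm B y * Rm B y) v

lemma ff0_eq (J B : Mat) (v : Vec) : ff0 J B v = fun y => dd J (Rm B y) v := rfl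

lemma dd_smul (J X : Mat) (v : Vec) (c : ℝ) : dd J (c • X) v = c * dd J X v := by
  simp [dd, mul_smul_comm, Matrix.smul_mulVec, dotProduct_smul, smul_eq_mul]

lemma dd_sub (J X Y : Mat) (v : Vec) : dd J (X - Y) v = dd J X v - dd J Y v := by
  simp [dd, Matrix.mul_sub, Matrix.sub_mulVec, dotProduct_sub]

lemma dd_add (J X Y : Mat) (v : Vec) : dd J (X + Y) v = dd J X v + dd J Y v := by
  simp [dd, Matrix.mul_add, Matrix.add_mulVec, dotProduct_add]

-- resolvent identity
lemma res_id {B : Mat} {t y : ℝ} (ht : IsUnit (t • (1 : Mat) - B)) (hy : IsUnit (y • (1 : Mat) - B)) :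
    Rm B t - Rm B y = (y - t) • (Rm B t * Rm B y) := by
  have ht' := (Matrix.isUnit_iff_isUnit_det _).mp ht
  have hy' := (Matrix.isUnit_iff_isUnit_det _).mp hy
  have h1 : Rm B t * ((y • (1 : Mat) - B) - (t • (1 : Mat) - B)) * Rm B y
      = Rm B t - Rm B y := by
    simp only [Rm]
    rw [Matrix.mul_sub, Matrix.sub_mul, mul_assoc, Matrix.mul_nonsing_inv _ hy', mul_one,
      Matrix.nonsing_inv_mul _ ht', one_mul]
  have h2 : (y • (1 : Mat) - B) - (t • (1 : Mat) - B) = (y - t) • (1 : Mat) := by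
    rw [sub_sub_sub_cancel_right, ← sub_smul]
  rw [← h1, h2, mul_smul_comm, mul_one, smul_mul_assoc]

-- continuity lemmas
lemma cont_det_open {B : Mat} : IsOpen {t : ℝ | IsUnit (t • (1 : Mat) - B)} := by
  have h : Continuous fun t : ℝ => (t • (1 : Mat) - B).det :=
    ((continuous_id.smul continuous_const).sub continuous_const).matrix_det
  have : {t : ℝ | IsUnit (t • (1 : Mat) - B)}
      = (fun t : ℝ => (t • (1 : Mat) - B).det) ⁻¹' ({0}ᶜ) := by
    ext t
    simp [Matrix.isUnit_iff_isUnit_det, isUnit_iff_ne_zero]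
  rw [this]
  exact isOpen_compl_singleton.preimage h

lemma contAt_inv {X : Mat} (h : IsUnit X) : ContinuousAt Inv.inv X := by
  apply continuousAt_matrix_inv
  rw [Ring.inverse_eq_inv']
  exact continuousAt_inv₀ (by
    simpa [isUnit_iff_ne_zero] using (Matrix.isUnit_iff_isUnit_det _).mp h)

lemma contAt_Rm {B : Mat} {y : ℝ} (hy : IsUnit (y • (1 : Mat) - B)) :
    ContinuousAt (Rm B) y := by
  have hc : Continuous fun t : ℝ => t • (1 : Mat) - B :=
    (continuous_id.smul continuous_const).sub continuous_const
  exact ContinuousAt.comp (contAt_inv hy) (hc.continuousAt (x := y))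

lemma cont_dd_right (J Y : Mat) (v : Vec) : Continuous fun X : Mat => dd J (X * Y) v := by
  unfold dd
  exact continuous_const.dotProduct
    ((continuous_const.matrix_mul (continuous_id.matrix_mul continuous_const)).matrix_mulVec
      continuous_const)

-- joint continuity over the product space
lemma cont_joint_Rm {B : Mat} {v : Vec} {y : ℝ}
    (hy : IsUnit (y • (1 : Mat) - B)) :
    ContinuousAt (fun w : (Mat × Vec) × ℝ => Rm w.1.1 w.2) ((B, v), y) := by
  have hc : Continuous fun w : (Mat × Vec) × ℝ => w.2 • (1 : Mat) - w.1.1 :=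
    (continuous_snd.smul continuous_const).sub continuous_fst.fst
  exact ContinuousAt.comp (contAt_inv hy) (hc.continuousAt (x := ((B, v), y)))

lemma cont_G (J : Mat) (k : ℕ) : Continuous fun q : Mat × Vec => dd J (q.1 ^ k) q.2 := by
  unfold dd
  exact continuous_snd.dotProduct
    ((continuous_const.matrix_mul (continuous_fst.pow k)).matrix_mulVec continuous_snd)

lemma contAt_joint (J : Mat) {B : Mat} {v : Vec} {y : ℝ} (k : ℕ)
    (hy : IsUnit (y • (1 : Mat) - B)) :
    ContinuousAt (fun w : (Mat × Vec) × ℝ => dd J ((Rm w.1.1 w.2) ^ k) w.1.2) ((B, v), y) := by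
  have h1 : ContinuousAt (fun w : (Mat × Vec) × ℝ => (Rm w.1.1 w.2, w.1.2)) ((B, v), y) :=
    (cont_joint_Rm hy).prodMk (continuous_fst.snd.continuousAt (x := ((B, v), y)))
  change ContinuousAt ((fun q : Mat × Vec => dd J (q.1 ^ k) q.2) ∘
    (fun w : (Mat × Vec) × ℝ => (Rm w.1.1 w.2, w.1.2))) ((B, v), y)
  exact ContinuousAt.comp ((cont_G J k).continuousAt (x := (Rm B y, v))) h1

lemma cont_dd_comp (J : Mat) (v : Vec) {f : Mat → Mat} (hf : Continuous f) :
    Continuous fun X : Mat => dd J (f X) v := by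
  unfold dd
  exact continuous_const.dotProduct
    ((continuous_const.matrix_mul hf).matrix_mulVec continuous_const)

lemma hasDeriv0 (J : Mat) {B : Mat} {v : Vec} {y : ℝ} (hy : IsUnit (y • (1 : Mat) - B)) :
    HasDerivAt (ff0 J B v) (ff1 J B v y) y := by
  rw [hasDerivAt_iff_tendsto_slope]
  have hev : ∀ᶠ t in nhdsWithin y {y}ᶜ,
      slope (ff0 J B v) y t = -(dd J (Rm B t * Rm B y) v) := by
    filter_upwards [mem_nhdsWithin_of_mem_nhds (cont_det_open.mem_nhds hy),
      self_mem_nhdsWithin] with t ht htne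
    have hid := res_id ht hy
    have hty : t - y ≠ 0 := sub_ne_zero.mpr htne
    have e1 : ff0 J B v t - ff0 J B v y = (y - t) * dd J (Rm B t * Rm B y) v := by
      show dd J (Rm B t) v - dd J (Rm B y) v = _
      rw [← dd_sub, hid, dd_smul]
    rw [slope_def_field, e1, div_eq_iff hty]
    ring
  have hc : ContinuousAt (fun t : ℝ => dd J (Rm B t * Rm B y) v) y := by
    change ContinuousAt ((fun X : Mat => dd J (X * Rm B y) v) ∘ Rm B) y
    exact ContinuousAt.comp
      ((cont_dd_comp J v (continuous_id.matrix_mul continuous_const)).continuousAt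
        (x := Rm B y)) (contAt_Rm hy)
  have hT : Filter.Tendsto (fun t : ℝ => -(dd J (Rm B t * Rm B y) v)) (nhdsWithin y {y}ᶜ)
      (nhds (ff1 J B v y)) :=
    (hc.neg.tendsto).mono_left nhdsWithin_le_nhds
  exact hT.congr' (by filter_upwards [hev] with t h using h.symm)

lemma hasDeriv1 (J : Mat) {B : Mat} {v : Vec} {y : ℝ} (hy : IsUnit (y • (1 : Mat) - B)) :
    HasDerivAt (ff1 J B v) (ff2 J B v y) y := by
  rw [hasDerivAt_iff_tendsto_slope]
  have hev : ∀ᶠ t in nhdsWithin y {y}ᶜ,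
      slope (ff1 J B v) y t
        = dd J (Rm B t * Rm B t * Rm B y) v + dd J (Rm B t * Rm B y * Rm B y) v := by
    filter_upwards [mem_nhdsWithin_of_mem_nhds (cont_det_open.mem_nhds hy),
      self_mem_nhdsWithin] with t ht htne
    have hid := res_id ht hy
    have hty : t - y ≠ 0 := sub_ne_zero.mpr htne
    have hm : Rm B t * Rm B t - Rm B y * Rm B y
        = (y - t) • (Rm B t * Rm B t * Rm B y) + (y - t) • (Rm B t * Rm B y * Rm B y) := by
      have h2 : Rm B t * Rm B t - Rm B y * Rm B y
          = Rm B t * (Rm B t - Rm B y) + (Rm B t - Rm B y) * Rm B y := by noncomm_ring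
      rw [h2, hid, mul_smul_comm, smul_mul_assoc, ← mul_assoc]
    have e0 : dd J (Rm B t * Rm B t) v - dd J (Rm B y * Rm B y) v
        = (y - t) * dd J (Rm B t * Rm B t * Rm B y) v
          + (y - t) * dd J (Rm B t * Rm B y * Rm B y) v := by
      rw [← dd_sub, hm, dd_add, dd_smul, dd_smul]
    have e1 : ff1 J B v t - ff1 J B v y
        = (t - y) * (dd J (Rm B t * Rm B t * Rm B y) v
            + dd J (Rm B t * Rm B y * Rm B y) v) := by
      show -(dd J (Rm B t * Rm B t) v) - -(dd J (Rm B y * Rm B y) v) = _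
      linear_combination (-1 : ℝ) * e0
    rw [slope_def_field, e1, div_eq_iff hty]
    ring
  have hc1 : ContinuousAt (fun t : ℝ => dd J (Rm B t * Rm B t * Rm B y) v) y := by
    change ContinuousAt ((fun X : Mat => dd J (X * X * Rm B y) v) ∘ Rm B) y
    exact ContinuousAt.comp
      ((cont_dd_comp J v ((continuous_id.matrix_mul continuous_id).matrix_mul
        continuous_const)).continuousAt (x := Rm B y)) (contAt_Rm hy)
  have hc2 : ContinuousAt (fun t : ℝ => dd J (Rm B t * Rm B y * Rm B y) v) y := by
    change ContinuousAt ((fun X : Mat => dd J (X * Rm B y * Rm B y) v) ∘ Rm B) y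
    exact ContinuousAt.comp
      ((cont_dd_comp J v ((continuous_id.matrix_mul continuous_const).matrix_mul
        continuous_const)).continuousAt (x := Rm B y)) (contAt_Rm hy)
  have hT : Filter.Tendsto
      (fun t : ℝ => dd J (Rm B t * Rm B t * Rm B y) v + dd J (Rm B t * Rm B y * Rm B y) v)
      (nhdsWithin y {y}ᶜ) (nhds (ff2 J B v y)) := by
    have := (hc1.add hc2).tendsto
    simp only [Pi.add_def] at this
    rw [show dd J (Rm B y * Rm B y * Rm B y) v + dd J (Rm B y * Rm B y * Rm B y) v
      = ff2 J B v y by rw [ff2]; ring] at this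
    exact this.mono_left nhdsWithin_le_nhds
  exact hT.congr' (by filter_upwards [hev] with t h using h.symm)

lemma deriv_ff0 (J : Mat) {B : Mat} {v : Vec} {y : ℝ} (hy : IsUnit (y • (1 : Mat) - B)) :
    deriv (ff0 J B v) y = ff1 J B v y := (hasDeriv0 J hy).deriv

lemma deriv2_ff0 (J : Mat) {B : Mat} {v : Vec} {y : ℝ} (hy : IsUnit (y • (1 : Mat) - B)) :
    deriv (deriv (ff0 J B v)) y = ff2 J B v y := by
  have hev : deriv (ff0 J B v) =ᶠ[nhds y] ff1 J B v := by
    filter_upwards [cont_det_open.mem_nhds hy] with t ht using (hasDeriv0 J ht).deriv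
  rw [hev.deriv_eq]
  exact (hasDeriv1 J hy).deriv

lemma spec_iff (B : Mat) (y : ℝ) : y ∉ spectrum ℝ B ↔ IsUnit (y • (1 : Mat) - B) := by
  rw [spectrum.notMem_iff, Algebra.algebraMap_eq_smul_one]

lemma pi_norm_le_euclid (w : Fin n → ℝ) :
    ‖w‖ ≤ ‖(show EuclideanSpace ℝ (Fin n) from WithLp.toLp 2 w)‖ := by
  rw [pi_norm_le_iff_of_nonneg (norm_nonneg _)]
  intro i
  rw [EuclideanSpace.norm_eq]
  have h1 : ‖w i‖ = Real.sqrt (‖w i‖ ^ 2) := (Real.sqrt_sq (norm_nonneg _)).symm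
  rw [h1]
  apply Real.sqrt_le_sqrt
  exact Finset.single_le_sum (f := fun j => ‖w j‖ ^ 2) (fun j _ => sq_nonneg _)
    (Finset.mem_univ i)

lemma isOpen_unit_joint {B : Mat} : IsOpen {w : (Mat × Vec) × ℝ | IsUnit (w.2 • (1 : Mat) - w.1.1)} := by
  have h : Continuous fun w : (Mat × Vec) × ℝ => (w.2 • (1 : Mat) - w.1.1).det :=
    ((continuous_snd.smul continuous_const).sub continuous_fst.fst).matrix_det
  have he : {w : (Mat × Vec) × ℝ | IsUnit (w.2 • (1 : Mat) - w.1.1)}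
      = (fun w : (Mat × Vec) × ℝ => (w.2 • (1 : Mat) - w.1.1).det) ⁻¹' ({0}ᶜ) := by
    ext w
    simp [Matrix.isUnit_iff_isUnit_det, isUnit_iff_ne_zero]
  rw [he]
  exact isOpen_compl_singleton.preimage h

lemma contAt_ff0 (J : Mat) {B : Mat} {v : Vec} {y : ℝ} (hy : IsUnit (y • (1 : Mat) - B)) :
    ContinuousAt (fun w : (Mat × Vec) × ℝ => ff0 J w.1.1 w.1.2 w.2) ((B, v), y) := by
  have h := contAt_joint J (v := v) 1 hy
  simp only [pow_one] at h
  exact h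

lemma contAt_ff1 (J : Mat) {B : Mat} {v : Vec} {y : ℝ} (hy : IsUnit (y • (1 : Mat) - B)) :
    ContinuousAt (fun w : (Mat × Vec) × ℝ => ff1 J w.1.1 w.1.2 w.2) ((B, v), y) := by
  have h := contAt_joint J (v := v) 2 hy
  simp only [pow_two] at h
  exact h.neg

lemma contAt_ff2 (J : Mat) {B : Mat} {v : Vec} {y : ℝ} (hy : IsUnit (y • (1 : Mat) - B)) :
    ContinuousAt (fun w : (Mat × Vec) × ℝ => ff2 J w.1.1 w.1.2 w.2) ((B, v), y) := by
  have h := contAt_joint J (v := v) 3 hy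
  simp only [pow_succ, pow_zero, one_mul] at h
  exact h.const_mul 2

lemma contAt_ff0_one (J : Mat) {B : Mat} {v : Vec} {y : ℝ} (hy : IsUnit (y • (1 : Mat) - B)) :
    ContinuousAt (ff0 J B v) y := by
  change ContinuousAt ((fun w : (Mat × Vec) × ℝ => ff0 J w.1.1 w.1.2 w.2) ∘
    (fun t : ℝ => ((B, v), t))) y
  exact ContinuousAt.comp (contAt_ff0 J hy)
    ((continuous_const.prodMk continuous_id).continuousAt (x := y))

lemma contAt_ff1_one (J : Mat) {B : Mat} {v : Vec} {y : ℝ} (hy : IsUnit (y • (1 : Mat) - B)) :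
    ContinuousAt (ff1 J B v) y := by
  change ContinuousAt ((fun w : (Mat × Vec) × ℝ => ff1 J w.1.1 w.1.2 w.2) ∘
    (fun t : ℝ => ((B, v), t))) y
  exact ContinuousAt.comp (contAt_ff1 J hy)
    ((continuous_const.prodMk continuous_id).continuousAt (x := y))

lemma contAt_ff2_one (J : Mat) {B : Mat} {v : Vec} {y : ℝ} (hy : IsUnit (y • (1 : Mat) - B)) :
    ContinuousAt (ff2 J B v) y := by
  change ContinuousAt ((fun w : (Mat × Vec) × ℝ => ff2 J w.1.1 w.1.2 w.2) ∘
    (fun t : ℝ => ((B, v), t))) y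
  exact ContinuousAt.comp (contAt_ff2 J hy)
    ((continuous_const.prodMk continuous_id).continuousAt (x := y))

/-- Stability, within the class of `J`-Hamiltonian real matrices, of a
double-eigenvalue obstruction at a real point: if `Q(x) = 1/τ₀`, `Q'(x) = 0`, `Q''(x) ≠ 0`
for some real `x ∉ σ(A)` and `τ₀ > 0`, where `Q(λ) = u^⊤J(λI − A)⁻¹u`, then the same holds
(with `x̃` near `x`) for every `J`-Hamiltonian `Ã` near `A` and every `ũ` near `u`. -/
theorem stmt17 (n : ℕ) (hn : 1 ≤ n) (J : Matrix (Fin n) (Fin n) ℝ)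
    (hJ : Jᵀ = -J) (hJinv : IsUnit J)
    (A : Matrix (Fin n) (Fin n) ℝ) (hA : J * A = -(Aᵀ * J)) (u : Fin n → ℝ)
    (Q : ℝ → ℝ)
    (hQ : Q = fun x : ℝ =>
      u ⬝ᵥ ((J * (x • (1 : Matrix (Fin n) (Fin n) ℝ) - A)⁻¹) *ᵥ u))
    (x : ℝ) (hx : x ∉ spectrum ℝ A) (τ0 : ℝ) (hτ0 : 0 < τ0)
    (h1 : Q x = 1 / τ0) (h2 : deriv Q x = 0) (h3 : deriv (deriv Q) x ≠ 0) :
    ∀ δ : ℝ, 0 < δ → ∃ ε : ℝ, 0 < ε ∧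
      ∀ (A' : Matrix (Fin n) (Fin n) ℝ) (u' : Fin n → ℝ),
        J * A' = -(A'ᵀ * J) →
        ‖A' - A‖ < ε →
        ‖(show EuclideanSpace ℝ (Fin n) from WithLp.toLp 2 (u' - u))‖ < ε →
        ∃ x' : ℝ, x' ∉ spectrum ℝ A' ∧ |x' - x| < δ ∧
          ∃ τ0' : ℝ, 0 < τ0' ∧
            (fun y : ℝ =>
              u' ⬝ᵥ ((J * (y • (1 : Matrix (Fin n) (Fin n) ℝ) - A')⁻¹) *ᵥ u')) x'
              = 1 / τ0' ∧
            deriv (fun y : ℝ =>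
              u' ⬝ᵥ ((J * (y • (1 : Matrix (Fin n) (Fin n) ℝ) - A')⁻¹) *ᵥ u')) x' = 0 ∧
            deriv (deriv (fun y : ℝ =>
              u' ⬝ᵥ ((J * (y • (1 : Matrix (Fin n) (Fin n) ℝ) - A')⁻¹) *ᵥ u'))) x' ≠ 0 := by
  intro δ hδ
  have hQA : Q = ff0 J A u := hQ
  have hxu : IsUnit (x • (1 : Matrix (Fin n) (Fin n) ℝ) - A) := (spec_iff A x).mp hx
  have h2' : ff1 J A u x = 0 := by
    rw [← deriv_ff0 J hxu, ← hQA]; exact h2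
  have h3' : ff2 J A u x ≠ 0 := by
    rw [← deriv2_ff0 J hxu, ← hQA]; exact h3
  have h1' : ff0 J A u x = 1 / τ0 := by rw [← hQA]; exact h1
  set c := ff2 J A u x with hcdef
  have hf0pos : 0 < ff0 J A u x := by rw [h1']; positivity
  have hccpos : 0 < c * ff2 J A u x := by rw [← hcdef]; exact mul_self_pos.mpr h3'
  have hVev : ∀ᶠ t in nhds x,
      IsUnit (t • (1 : Matrix (Fin n) (Fin n) ℝ) - A) ∧ 0 < c * ff2 J A u t ∧ 0 < ff0 J A u t := by
    have e1 := (cont_det_open (B := A)).eventually_mem hxu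
    have e2 : ∀ᶠ t in nhds x, 0 < c * ff2 J A u t :=
      ((contAt_ff2_one J hxu).const_mul c).eventually (eventually_gt_nhds hccpos)
    have e3 : ∀ᶠ t in nhds x, 0 < ff0 J A u t :=
      (contAt_ff0_one J hxu).eventually (eventually_gt_nhds hf0pos)
    filter_upwards [e1, e2, e3] with t ht1 ht2 ht3 using ⟨ht1, ht2, ht3⟩
  rw [Metric.eventually_nhds_iff] at hVev
  obtain ⟨r, hr, hVr⟩ := hVev
  set δ' := min (r / 2) (δ / 2) with hδ'def
  have hδ'0 : 0 < δ' := lt_min (by linarith) (by linarith)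
  have hδ'δ : δ' < δ := (min_le_right _ _).trans_lt (by linarith)
  set a := x - δ' with hadef
  set b := x + δ' with hbdef
  have hKV : ∀ t ∈ Icc a b,
      IsUnit (t • (1 : Matrix (Fin n) (Fin n) ℝ) - A) ∧ 0 < c * ff2 J A u t ∧ 0 < ff0 J A u t := by
    intro t ht
    apply hVr
    rw [Real.dist_eq]
    have h1t := ht.1
    have h2t := ht.2
    have habs : |t - x| ≤ δ' := by
      rw [abs_sub_le_iff]
      constructor
      · rw [hbdef] at h2t; linarith
      · rw [hadef] at h1t; linarith
    calc |t - x| ≤ δ' := habs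
      _ ≤ r / 2 := min_le_left _ _
      _ < r := by linarith
  have hmono : StrictMonoOn (fun t => c * ff1 J A u t) (Icc a b) := by
    apply strictMonoOn_of_deriv_pos (convex_Icc a b)
    · intro t ht
      exact ContinuousAt.continuousWithinAt
        ((contAt_ff1_one J (v := u) (hKV t ht).1).const_mul c)
    · intro t ht
      rw [interior_Icc] at ht
      have htK : t ∈ Icc a b := Ioo_subset_Icc_self ht
      have hut := (hKV t htK).1
      rw [((hasDeriv1 J hut).const_mul c).deriv]
      exact (hKV t htK).2.1
  have hax : a < x := by rw [hadef]; linarith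
  have hxb : x < b := by rw [hbdef]; linarith
  have haK : a ∈ Icc a b := left_mem_Icc.mpr (by linarith)
  have hbK : b ∈ Icc a b := right_mem_Icc.mpr (by linarith)
  have hxK : x ∈ Icc a b := ⟨le_of_lt hax, le_of_lt hxb⟩
  have hc0 : c * ff1 J A u x = 0 := by rw [h2', mul_zero]
  have hfa : c * ff1 J A u a < 0 := by
    simpa [hc0] using hmono haK hxK hax
  have hfb : 0 < c * ff1 J A u b := by
    simpa [hc0] using hmono hxK hbK hxb
  have htube : ∀ᶠ z : Matrix (Fin n) (Fin n) ℝ × (Fin n → ℝ) in nhds (A, u), ∀ t ∈ Icc a b,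
      IsUnit (t • (1 : Matrix (Fin n) (Fin n) ℝ) - z.1) ∧ 0 < c * ff2 J z.1 z.2 t ∧ 0 < ff0 J z.1 z.2 t := by
    apply isCompact_Icc.eventually_forall_of_forall_eventually
    intro t ht
    have h1t := (hKV t ht).1
    have eU : ∀ᶠ w : (Matrix (Fin n) (Fin n) ℝ × (Fin n → ℝ)) × ℝ in nhds ((A, u), t),
        IsUnit (w.2 • (1 : Matrix (Fin n) (Fin n) ℝ) - w.1.1) :=
      (isOpen_unit_joint (B := A)).eventually_mem h1t
    have e2 : ∀ᶠ w : (Matrix (Fin n) (Fin n) ℝ × (Fin n → ℝ)) × ℝ in nhds ((A, u), t),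
        0 < c * ff2 J w.1.1 w.1.2 w.2 :=
      ((contAt_ff2 J h1t).const_mul c).eventually (eventually_gt_nhds (hKV t ht).2.1)
    have e3 : ∀ᶠ w : (Matrix (Fin n) (Fin n) ℝ × (Fin n → ℝ)) × ℝ in nhds ((A, u), t),
        0 < ff0 J w.1.1 w.1.2 w.2 :=
      (contAt_ff0 J h1t).eventually (eventually_gt_nhds (hKV t ht).2.2)
    filter_upwards [eU, e2, e3] with w w1 w2 w3 using ⟨w1, w2, w3⟩
  have hend : ∀ᶠ z : Matrix (Fin n) (Fin n) ℝ × (Fin n → ℝ) in nhds (A, u),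
      c * ff1 J z.1 z.2 a < 0 ∧ 0 < c * ff1 J z.1 z.2 b := by
    have ca : ContinuousAt (fun z : Matrix (Fin n) (Fin n) ℝ × (Fin n → ℝ) => c * ff1 J z.1 z.2 a) (A, u) := by
      change ContinuousAt ((fun w : (Matrix (Fin n) (Fin n) ℝ × (Fin n → ℝ)) × ℝ => c * ff1 J w.1.1 w.1.2 w.2) ∘
        (fun z : Matrix (Fin n) (Fin n) ℝ × (Fin n → ℝ) => (z, a))) (A, u)
      exact ContinuousAt.comp (((contAt_ff1 J (hKV a haK).1).const_mul c))
        ((continuous_id.prodMk continuous_const).continuousAt (x := (A, u)))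
    have cb : ContinuousAt (fun z : Matrix (Fin n) (Fin n) ℝ × (Fin n → ℝ) => c * ff1 J z.1 z.2 b) (A, u) := by
      change ContinuousAt ((fun w : (Matrix (Fin n) (Fin n) ℝ × (Fin n → ℝ)) × ℝ => c * ff1 J w.1.1 w.1.2 w.2) ∘
        (fun z : Matrix (Fin n) (Fin n) ℝ × (Fin n → ℝ) => (z, b))) (A, u)
      exact ContinuousAt.comp (((contAt_ff1 J (hKV b hbK).1).const_mul c))
        ((continuous_id.prodMk continuous_const).continuousAt (x := (A, u)))
    have e1 := ca.eventually (eventually_lt_nhds hfa)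
    have e2 := cb.eventually (eventually_gt_nhds hfb)
    filter_upwards [e1, e2] with z z1 z2 using ⟨z1, z2⟩
  have hall := htube.and hend
  replace hall := Metric.eventually_nhds_iff.mp hall
  obtain ⟨ε, hε, hball⟩ := hall
  refine ⟨ε, hε, ?_⟩
  intro A' u' _hham hA' hu'
  have hdist : dist ((A', u') : Matrix (Fin n) (Fin n) ℝ × (Fin n → ℝ)) ((A, u) : Matrix (Fin n) (Fin n) ℝ × (Fin n → ℝ)) < ε := by
    rw [Prod.dist_eq]
    apply max_lt
    · rw [dist_eq_norm]; exact hA'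
    · rw [dist_eq_norm]
      exact lt_of_le_of_lt (pi_norm_le_euclid (u' - u)) hu'
  obtain ⟨hK', hend'⟩ := hball hdist
  have hconK : ContinuousOn (fun t => c * ff1 J A' u' t) (Icc a b) := fun t ht =>
    ContinuousAt.continuousWithinAt ((contAt_ff1_one J (v := u') (hK' t ht).1).const_mul c)
  have hab : a ≤ b := by linarith
  obtain ⟨x', hx'K, hx'0⟩ := intermediate_value_Icc hab hconK
    ⟨le_of_lt hend'.1, le_of_lt hend'.2⟩
  have hx'unit := (hK' x' hx'K).1
  have hf1x' : ff1 J A' u' x' = 0 := by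
    rcases mul_eq_zero.mp hx'0 with h | h
    · exact absurd h h3'
    · exact h
  refine ⟨x', (spec_iff A' x').mpr hx'unit, ?_, ?_⟩
  · have h1t := hx'K.1
    have h2t := hx'K.2
    rw [abs_sub_lt_iff]
    constructor
    · rw [hbdef] at h2t; linarith
    · rw [hadef] at h1t; linarith
  · have hf0pos' : 0 < ff0 J A' u' x' := (hK' x' hx'K).2.2
    refine ⟨(ff0 J A' u' x')⁻¹, inv_pos.mpr hf0pos', ?_, ?_, ?_⟩
    · show ff0 J A' u' x' = 1 / (ff0 J A' u' x')⁻¹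
      rw [one_div, inv_inv]
    · show deriv (ff0 J A' u') x' = 0
      rw [deriv_ff0 J hx'unit, hf1x']
    · show deriv (deriv (ff0 J A' u')) x' ≠ 0
      rw [deriv2_ff0 J hx'unit]
      intro h0
      have hp := (hK' x' hx'K).2.1
      rw [h0, mul_zero] at hp
      exact lt_irrefl 0 hp
end
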